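/- arXiv:2509.16523 — 8 statements merged into one kernel-verified Lean document; each statement's English description precedes it below -/
import Mathlib

section
/- If an ideal I in K[X_1,...,X_n] is generated by a (possibly infinite) family of polynomials each of degree at most d, then I can be generated by at most binomial(n+d-1, d) polynomials, each of degree at most d. -/
open MvPolynomial

namespace Stmt0Aux

open Finsupp

variable {n : ℕ}

/-- degree of a monomial exponent -/
def degw (a : Fin n →₀ ℕ) : ℕ := a.sum fun _ e => e

lemma degw_add (a b : Fin n →₀ ℕ) : degw (a + b) = degw a + degw b := by
  simp [degw, Finsupp.sum_add_index]

/-- deglex embedding -/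
def em (a : Fin n →₀ ℕ) : ℕ ×ₗ Lex (Fin n →₀ ℕ) := toLex (degw a, toLex a)

lemma em_inj : Function.Injective (em (n := n)) := by
  intro a b h
  have := congrArg (fun x => (ofLex x).2) h
  simpa [em] using this

lemma em_add_lt {a b : Fin n →₀ ℕ} (c : Fin n →₀ ℕ) (h : em a < em b) :
    em (c + a) < em (c + b) := by
  rw [em, em, Prod.Lex.lt_iff] at h ⊢
  rcases h with h | ⟨h1, h2⟩
  · left; simp only [degw_add, ofLex_toLex] at h ⊢; omega
  · right
    constructor
    · simp only [degw_add]; exact congrArg (degw c + ·) h1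
    · have e1 : toLex (c + a) = toLex c + toLex a := rfl
      have e2 : toLex (c + b) = toLex c + toLex b := rfl
      rw [e1, e2]
      exact (add_lt_add_iff_left _).2 h2

lemma degw_le_of_em_le {a b : Fin n →₀ ℕ} (h : em a ≤ em b) : degw a ≤ degw b := by
  rw [em, em, Prod.Lex.le_iff] at h
  rcases h with h | ⟨h1, _⟩
  · exact h.le
  · exact le_of_eq h1

variable {K : Type*} [Field K]

/-- leading monomial w.r.t. deglex -/
noncomputable def LM (f : MvPolynomial (Fin n) K) : Fin n →₀ ℕ :=
  if h : f.support.Nonempty then (Finset.exists_max_image f.support em h).choose else 0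

lemma LM_mem {f : MvPolynomial (Fin n) K} (hf : f ≠ 0) : LM f ∈ f.support := by
  have h : f.support.Nonempty := support_nonempty.2 hf
  rw [LM, dif_pos h]
  exact (Finset.exists_max_image f.support em h).choose_spec.1

lemma le_em_LM {f : MvPolynomial (Fin n) K} {a} (ha : a ∈ f.support) : em a ≤ em (LM f) := by
  have hf : f.support.Nonempty := ⟨a, ha⟩
  rw [LM, dif_pos hf]
  exact (Finset.exists_max_image _ em hf).choose_spec.2 a ha

lemma coeff_LM_ne_zero {f : MvPolynomial (Fin n) K} (hf : f ≠ 0) : coeff (LM f) f ≠ 0 :=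
  MvPolynomial.mem_support_iff.1 (LM_mem hf)

lemma totalDegree_le_degw_LM {f : MvPolynomial (Fin n) K} (hf : f ≠ 0) :
    f.totalDegree ≤ degw (LM f) := by
  clear hf
  apply Finset.sup_le
  intro a ha
  exact degw_le_of_em_le (le_em_LM ha)

lemma degw_LM_le_totalDegree {f : MvPolynomial (Fin n) K} (hf : f ≠ 0) :
    degw (LM f) ≤ f.totalDegree :=
  le_totalDegree (LM_mem hf)

end Stmt0Aux

open Stmt0Aux

theorem stmt_0 {K : Type*} [Field K] (n d : ℕ) (hn : 0 < n) (hd : 0 < d)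
    (S : Set (MvPolynomial (Fin n) K)) (hS : ∀ f ∈ S, f.totalDegree ≤ d) :
    ∃ T : Finset (MvPolynomial (Fin n) K),
      T.card ≤ (n + d - 1).choose d ∧
      (∀ f ∈ T, f.totalDegree ≤ d) ∧
      Ideal.span (T : Set (MvPolynomial (Fin n) K)) = Ideal.span S := by
  classical
  set V : Set (MvPolynomial (Fin n) K) := {f | f ≠ 0 ∧ f ∈ Ideal.span S ∧ f.totalDegree ≤ d} with hV
  set M : Set (Fin n →₀ ℕ) := LM '' V with hM
  -- monomials in M have degree ≤ d
  have hMdeg : ∀ m ∈ M, degw m ≤ d := by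
    rintro m ⟨f, ⟨hf0, _, hfd⟩, rfl⟩
    exact (degw_LM_le_totalDegree hf0).trans hfd
  set Mmin : Set (Fin n →₀ ℕ) := {m | m ∈ M ∧ ∀ m' ∈ M, m' ≤ m → m' = m} with hMmin
  -- every element of M is bounded below by an element of Mmin
  have hbelow : ∀ m ∈ M, ∃ m₀ ∈ Mmin, m₀ ≤ m := by
    intro m hm
    obtain ⟨m₀, ⟨hm₀M, hm₀le⟩, hmin⟩ :=
      (wellFounded_lt (α := Fin n →₀ ℕ)).has_min {m' | m' ∈ M ∧ m' ≤ m} ⟨m, hm, le_rfl⟩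
    refine ⟨m₀, ⟨hm₀M, ?_⟩, hm₀le⟩
    intro m' hm' hle
    by_contra hne
    exact hmin m' ⟨hm', hle.trans hm₀le⟩ (lt_of_le_of_ne hle hne)
  -- injection of Mmin into Sym (Fin n) d
  set i0 : Fin n := ⟨0, hn⟩
  have hdegsingle : ∀ (k : ℕ), degw (Finsupp.single i0 k) = k := by
    intro k
    simp [degw, Finsupp.sum_single_index]
  set ψ : (Fin n →₀ ℕ) → Sym (Fin n) d := fun a =>
    if h : degw a ≤ d then
      ⟨Finsupp.toMultiset (a + Finsupp.single i0 (d - degw a)), by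
        have : (a + Finsupp.single i0 (d - degw a)).sum (fun _ => id) = d := by
          have h1 := degw_add a (Finsupp.single i0 (d - degw a))
          have h2 := hdegsingle (d - degw a)
          show degw (a + Finsupp.single i0 (d - degw a)) = d
          omega
        simp only [Finsupp.card_toMultiset, this]⟩
    else Sym.replicate d i0 with hψ
  have hψinj : Set.InjOn ψ Mmin := by
    intro a ha b hb hab
    have hda : degw a ≤ d := hMdeg a ha.1
    have hdb : degw b ≤ d := hMdeg b hb.1
    rw [hψ] at hab
    simp only [dif_pos hda, dif_pos hdb] at hab
    have h2 : Finsupp.toMultiset (a + Finsupp.single i0 (d - degw a))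
        = Finsupp.toMultiset (b + Finsupp.single i0 (d - degw b)) := by
          have ea : (ψ a).1 = Finsupp.toMultiset (a + Finsupp.single i0 (d - degw a)) :=
            congrArg Subtype.val (dif_pos hda)
          have eb : (ψ b).1 = Finsupp.toMultiset (b + Finsupp.single i0 (d - degw b)) :=
            congrArg Subtype.val (dif_pos hdb)
          exact ea.symm.trans ((congrArg Subtype.val hab).trans eb)
    have h : a + Finsupp.single i0 (d - degw a) = b + Finsupp.single i0 (d - degw b) := by
      have h3 := congrArg Multiset.toFinsupp h2
      simpa only [Finsupp.toMultiset_toFinsupp] using h3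
    have hkey : ∀ j : Fin n, a j + (Finsupp.single i0 (d - degw a)) j
        = b j + (Finsupp.single i0 (d - degw b)) j := by
      intro j; exact DFunLike.congr_fun h j
    rcases le_total (d - degw a) (d - degw b) with hle | hle
    · have hba : b ≤ a := by
        rw [Finsupp.le_def]
        intro j
        have hj := hkey j
        rcases eq_or_ne j i0 with rfl | hne
        · simp [Finsupp.single_apply] at hj; omega
        · rw [Finsupp.single_eq_of_ne' (Ne.symm hne), Finsupp.single_eq_of_ne' (Ne.symm hne)] at hj
          omega
      exact (ha.2 b hb.1 hba).symm
    · have hab' : a ≤ b := by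
        rw [Finsupp.le_def]
        intro j
        have hj := hkey j
        rcases eq_or_ne j i0 with rfl | hne
        · simp [Finsupp.single_apply] at hj; omega
        · rw [Finsupp.single_eq_of_ne' (Ne.symm hne), Finsupp.single_eq_of_ne' (Ne.symm hne)] at hj
          omega
      exact hb.2 a ha.1 hab'
  -- Mmin is finite with card bound
  have hMminfin : Mmin.Finite := by
    apply Set.Finite.of_finite_image (f := ψ) (Set.toFinite _) hψinj
  -- choose a generator for each minimal monomial
  set fc : (Fin n →₀ ℕ) → MvPolynomial (Fin n) K := fun m => if h : m ∈ M then h.choose else 0 with hfc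
  have hfcV : ∀ m ∈ M, fc m ∈ V ∧ LM (fc m) = m := by
    intro m hm
    rw [hfc]
    simp only [dif_pos hm]
    exact ⟨hm.choose_spec.1, hm.choose_spec.2⟩
  set T : Finset (MvPolynomial (Fin n) K) := hMminfin.toFinset.image fc with hT
  have hTcard : T.card ≤ (n + d - 1).choose d := by
    calc T.card ≤ hMminfin.toFinset.card := Finset.card_image_le
    _ ≤ (Finset.univ : Finset (Sym (Fin n) d)).card := by
        apply Finset.card_le_card_of_injOn ψ (fun a _ => Finset.mem_univ (ψ a))
        intro a ha b hb hab
        simp only [Set.Finite.coe_toFinset] at ha hb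
        exact hψinj ha hb hab
    _ = (n + d - 1).choose d := by
        rw [Finset.card_univ, Sym.card_sym_eq_choose, Fintype.card_fin]
  have hTV : ∀ f ∈ T, f ∈ V := by
    intro f hf
    rw [hT, Finset.mem_image] at hf
    obtain ⟨m, hm, rfl⟩ := hf
    rw [Set.Finite.mem_toFinset] at hm
    exact (hfcV m hm.1).1
  have hTdeg : ∀ f ∈ T, f.totalDegree ≤ d := fun f hf => (hTV f hf).2.2
  have hTspan : (T : Set (MvPolynomial (Fin n) K)) ⊆ (Ideal.span S : Ideal (MvPolynomial (Fin n) K)) := fun f hf => (hTV f hf).2.1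
  have hmain : ∀ f : MvPolynomial (Fin n) K, f ∈ Ideal.span S → f.totalDegree ≤ d →
      f ∈ Ideal.span (T : Set (MvPolynomial (Fin n) K)) := by
    by_contra hcon
    push_neg at hcon
    set B : Set (ℕ ×ₗ Lex (Fin n →₀ ℕ)) := {x | ∃ f : MvPolynomial (Fin n) K, f ∈ Ideal.span S ∧
      f.totalDegree ≤ d ∧ f ∉ Ideal.span (T : Set (MvPolynomial (Fin n) K)) ∧ em (LM f) = x} with hB
    obtain ⟨f₀, h1, h2, h3⟩ := hcon
    obtain ⟨x₀, ⟨f, hfS, hfd, hfT, hfx⟩, hminx⟩ :=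
      (wellFounded_lt (α := ℕ ×ₗ Lex (Fin n →₀ ℕ))).has_min B ⟨em (LM f₀), f₀, h1, h2, h3, rfl⟩
    have hf0 : f ≠ 0 := by rintro rfl; exact hfT (Ideal.zero_mem _)
    have hLMfM : LM f ∈ M := ⟨f, ⟨hf0, hfS, hfd⟩, rfl⟩
    obtain ⟨m₀, hm₀, hm₀le⟩ := hbelow _ hLMfM
    obtain ⟨hgV, hgLM⟩ := hfcV m₀ hm₀.1
    set g : MvPolynomial (Fin n) K := fc m₀ with hg
    have hgT : g ∈ T := Finset.mem_image_of_mem fc (hMminfin.mem_toFinset.2 hm₀)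
    have hg0 : g ≠ 0 := hgV.1
    have hgc : coeff m₀ g ≠ 0 := hgLM ▸ coeff_LM_ne_zero hg0
    set u : (Fin n →₀ ℕ) := LM f - m₀ with huu
    have hu : u + m₀ = LM f := tsub_add_cancel_of_le hm₀le
    set c : K := coeff (LM f) f / coeff m₀ g with hc'
    have hcne : c ≠ 0 := div_ne_zero (coeff_LM_ne_zero hf0) hgc
    set h : MvPolynomial (Fin n) K := f - monomial u c * g with hh
    have hLMh : coeff (LM f) h = 0 := by
      rw [hh, MvPolynomial.coeff_sub, ← hu, coeff_monomial_mul, hc', hu]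
      field_simp
      ring
    have hsupp : ∀ a ∈ h.support, em a < em (LM f) := by
      intro a ha
      have hcoeff : coeff a h ≠ 0 := MvPolynomial.mem_support_iff.1 ha
      have hane : a ≠ LM f := by rintro rfl; exact hcoeff hLMh
      have hcases : coeff a f ≠ 0 ∨ coeff a (monomial u c * g) ≠ 0 := by
        by_contra hboth
        push_neg at hboth
        exact hcoeff (by rw [hh, MvPolynomial.coeff_sub, hboth.1, hboth.2, sub_zero])
      rcases hcases with h1 | h2
      · exact lt_of_le_of_ne (le_em_LM (MvPolynomial.mem_support_iff.2 h1))
          (fun he => hane (em_inj he))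
      · have hmem := MvPolynomial.support_mul (monomial u c) g
          (MvPolynomial.mem_support_iff.2 h2)
        rw [Finset.mem_add] at hmem
        obtain ⟨y, hy, z, hz, rfl⟩ := hmem
        rw [support_monomial, if_neg hcne, Finset.mem_singleton] at hy
        subst hy
        have hzne : z ≠ m₀ := by rintro rfl; exact hane hu
        have hzlt : em z < em m₀ := lt_of_le_of_ne (hgLM ▸ le_em_LM hz)
          (fun he => hzne (em_inj he))
        have := em_add_lt u hzlt
        rwa [hu] at this
    have hhT : h ∉ Ideal.span (T : Set (MvPolynomial (Fin n) K)) := by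
      intro hhmem
      apply hfT
      have hfeq : f = h + monomial u c * g := by rw [hh]; ring
      rw [hfeq]
      exact Ideal.add_mem _ hhmem (Ideal.mul_mem_left _ _ (Ideal.subset_span hgT))
    have hh0 : h ≠ 0 := by
      intro h0
      rw [h0] at hhT
      exact hhT (Ideal.zero_mem _)
    have hhS : h ∈ Ideal.span S := by
      rw [hh]
      exact Ideal.sub_mem _ hfS (Ideal.mul_mem_left _ _ hgV.2.1)
    have hhd : h.totalDegree ≤ d := by
      rw [hh]
      refine le_trans (totalDegree_sub f _) (max_le hfd ?_)
      calc (monomial u c * g).totalDegree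
          ≤ (monomial u c).totalDegree + g.totalDegree := totalDegree_mul _ _
        _ ≤ degw u + degw m₀ :=
            add_le_add (totalDegree_monomial_le u c) (hgLM ▸ totalDegree_le_degw_LM hg0)
        _ = degw (LM f) := by rw [← degw_add, hu]
        _ ≤ f.totalDegree := degw_LM_le_totalDegree hf0
        _ ≤ d := hfd
    exact hminx (em (LM h)) ⟨h, hhS, hhd, hhT, rfl⟩ (hfx ▸ hsupp (LM h) (LM_mem hh0))
  refine ⟨T, hTcard, hTdeg, le_antisymm ?_ ?_⟩
  · rw [Ideal.span_le]; exact hTspan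
  · rw [Ideal.span_le]; intro f hf; exact hmain f (Ideal.subset_span hf) (hS f hf)
end

section
/- Let P_1,...,P_N be points in K^n where N = binomial(n+d,d), and let A be the N-by-N matrix whose rows are the evaluations of all monomials of degree at most d at the points P_i. If |K| > d, then the points can be chosen so that det A is nonzero. -/
open MvPolynomial

open Module Matrix Polynomial in
/-- If a finite family of functions is linearly independent, there exist points making the
evaluation matrix invertible. -/
theorem aux_exists_det_ne_zero_of_linearIndependent {K X : Type*} [Field K] {N : ℕ}
    {f : Fin N → (X → K)} (hf : LinearIndependent K f) :
    ∃ P : Fin N → X, (Matrix.of fun i j => f j (P i)).det ≠ 0 := by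
  classical
  set W : Submodule K (X → K) := Submodule.span K (Set.range f) with hW
  haveI : FiniteDimensional K W := FiniteDimensional.span_of_finite K (Set.finite_range f)
  let B : Basis (Fin N) K W := Basis.span hf
  have hrank : finrank K W = N := by
    rw [hW, finrank_span_eq_card hf, Fintype.card_fin]
  let ev : X → Module.Dual K W := fun x => (LinearMap.proj x).comp W.subtype
  set U : Submodule K (Module.Dual K W) := Submodule.span K (Set.range ev) with hU
  have hco : U.dualCoannihilator = ⊥ := by
    rw [Submodule.eq_bot_iff]
    intro w hw
    rw [Submodule.mem_dualCoannihilator] at hw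
    ext x
    exact hw (ev x) (Submodule.subset_span ⟨x, rfl⟩)
  have hUtop : U = ⊤ := by
    apply Submodule.eq_top_of_finrank_eq
    have h1 := Subspace.finrank_add_finrank_dualCoannihilator_eq U
    rw [hco, finrank_bot, add_zero] at h1
    rw [h1, Subspace.dual_finrank_eq]
  obtain ⟨s, hsub, hspan, hind⟩ := exists_linearIndependent K (Set.range ev)
  rw [← hU, hUtop] at hspan
  haveI : Fintype s := (hind.setFinite).fintype
  let bs : Basis s K (Module.Dual K W) := Basis.mk hind (by rw [Subtype.range_val, hspan])
  have hcard : Fintype.card s = N := by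
    rw [← finrank_eq_card_basis bs, Subspace.dual_finrank_eq, hrank]
  let e : Fin N ≃ s := (Fintype.equivFinOfCardEq hcard).symm
  let g : Basis (Fin N) K (Module.Dual K W) := bs.reindex e.symm
  have hg : ∀ i, ∃ x, ev x = g i := by
    intro i
    have hmem : (g i : Module.Dual K W) ∈ s := by
      simp only [g, Basis.reindex_apply, bs, Basis.mk_apply]
      exact Subtype.coe_prop _
    obtain ⟨x, hx⟩ := hsub hmem
    exact ⟨x, hx⟩
  choose P hP using hg
  refine ⟨P, ?_⟩
  have hmat : (Matrix.of fun i j => f j (P i)) = (B.dualBasis.toMatrix g)ᵀ := by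
    ext i j
    simp only [Matrix.transpose_apply, Matrix.of_apply, Basis.toMatrix_apply,
      Basis.dualBasis_repr]
    rw [← hP i]
    show f j (P i) = (B j : X → K) (P i)
    rw [Basis.span_apply]
  rw [hmat, Matrix.det_transpose]
  have hunit : IsUnit (B.dualBasis.toMatrix g).det := by
    apply Matrix.isUnit_det_of_left_inverse (B := g.toMatrix B.dualBasis)
    exact g.toMatrix_mul_toMatrix_flip B.dualBasis
  exact hunit.ne_zero

open Polynomial in
/-- A nonzero multivariate polynomial of total degree at most `d < #K` has a nonvanishing
point. -/
theorem aux_mv_exists_eval_ne_zero {K : Type*} [Field K] {d : ℕ}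
    (hK : (d : Cardinal) < Cardinal.mk K) :
    ∀ (n : ℕ) (F : MvPolynomial (Fin n) K), F ≠ 0 → F.totalDegree ≤ d →
      ∃ v : Fin n → K, MvPolynomial.eval v F ≠ 0 := by
  intro n
  induction n with
  | zero =>
    intro F hF _
    refine ⟨0, fun h => hF ?_⟩
    rw [eq_C_of_isEmpty F] at h ⊢
    rw [MvPolynomial.eval_C] at h
    rw [h, map_zero]
  | succ n IH =>
    intro F hF hdeg
    set φ := finSuccEquiv K n F with hφ
    have hφ0 : φ ≠ 0 := fun h => hF <| by
      apply (finSuccEquiv K n).injective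
      rw [← hφ, h, map_zero]
    obtain ⟨i, hi⟩ : ∃ i, φ.coeff i ≠ 0 := by
      by_contra h
      push_neg at h
      exact hφ0 (Polynomial.ext fun i => by simp [h i])
    have hcdeg : (φ.coeff i).totalDegree ≤ d :=
      le_trans (le_trans (Nat.le_add_right _ i)
        (totalDegree_coeff_finSuccEquiv_add_le F i hi)) hdeg
    obtain ⟨r, hr⟩ := IH (φ.coeff i) hi hcdeg
    set ψ : K[X] := Polynomial.map (MvPolynomial.eval r) φ with hψ
    have hψ0 : ψ ≠ 0 := fun h => hr <| by
      rw [← coeff_eval_eq_eval_coeff, ← hψ, h, Polynomial.coeff_zero]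
    have hψdeg : (ψ.natDegree : Cardinal) < Cardinal.mk K := by
      refine lt_of_le_of_lt ?_ hK
      have h1 : ψ.natDegree ≤ φ.natDegree := Polynomial.natDegree_map_le
      have h2 : φ.natDegree = F.degreeOf 0 := natDegree_finSuccEquiv F
      have h3 : F.degreeOf 0 ≤ F.totalDegree := degreeOf_le_totalDegree F 0
      exact_mod_cast le_trans h1 (h2 ▸ le_trans h3 hdeg)
    obtain ⟨r₀, hr₀⟩ := ψ.exists_eval_ne_zero_of_natDegree_lt_card hψ0 hψdeg
    exact ⟨Fin.cons r₀ r, by rwa [eval_eq_eval_mv_eval']⟩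

/-- Monomial functions of degree at most `d < #K` are linearly independent. -/
theorem aux_monomials_linearIndependent {K : Type*} [Field K] {n d N : ℕ}
    (hK : (d : Cardinal) < Cardinal.mk K) (m : Fin N → (Fin n →₀ ℕ))
    (hm : Function.Injective m) (hdeg : ∀ j, (m j).degree ≤ d) :
    LinearIndependent K (fun j => fun x : Fin n → K => ∏ k, x k ^ m j k) := by
  classical
  rw [Fintype.linearIndependent_iff]
  intro c hc j
  set F : MvPolynomial (Fin n) K := ∑ j, MvPolynomial.monomial (m j) (c j) with hF
  have hFdeg : F.totalDegree ≤ d := by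
    refine le_trans (MvPolynomial.totalDegree_finset_sum _ _) (Finset.sup_le fun j _ => ?_)
    refine le_trans (MvPolynomial.totalDegree_monomial_le _ _) ?_
    exact le_trans (le_of_eq rfl) (hdeg j)
  have hFeval : ∀ v : Fin n → K, MvPolynomial.eval v F = 0 := by
    intro v
    have h1 : MvPolynomial.eval v F = ∑ j, c j * ∏ k, v k ^ m j k := by
      simp [hF, MvPolynomial.eval_monomial, Finsupp.prod_pow]
    rw [h1]
    simpa using congrFun hc v
  have hF0 : F = 0 := by
    by_contra h0
    obtain ⟨v, hv⟩ := aux_mv_exists_eval_ne_zero hK n F h0 hFdeg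
    exact hv (hFeval v)
  have hcoeff := congrArg (MvPolynomial.coeff (m j)) hF0
  rw [hF, MvPolynomial.coeff_sum, MvPolynomial.coeff_zero] at hcoeff
  rw [Finset.sum_eq_single j (fun j' _ hj' => by
      rw [MvPolynomial.coeff_monomial, if_neg (fun h => hj' (hm h))])
    (fun h => absurd (Finset.mem_univ j) h)] at hcoeff
  rwa [MvPolynomial.coeff_monomial, if_pos rfl] at hcoeff

theorem stmt_6 {K : Type*} [Field K] (n d : ℕ) (hn : 0 < n) (hd : 0 < d)
    (hK : (d : Cardinal) < Cardinal.mk K)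
    (m : Fin ((n + d).choose d) → (Fin n →₀ ℕ))
    (hm : Function.Injective m)
    (hrange : ∀ s : Fin n →₀ ℕ, s ∈ Set.range m ↔ s.degree ≤ d) :
    ∃ P : Fin ((n + d).choose d) → (Fin n → K),
      (Matrix.of fun i j => ∏ k, P i k ^ (m j k)).det ≠ 0 := by
  have hdeg : ∀ j, (m j).degree ≤ d := fun j => (hrange (m j)).mp ⟨j, rfl⟩
  have hli := aux_monomials_linearIndependent hK m hm hdeg
  obtain ⟨P, hP⟩ := aux_exists_det_ne_zero_of_linearIndependent hli
  exact ⟨P, hP⟩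
end

section
/- The determinant of the multivariate Vandermonde matrix, viewed as a polynomial in the coordinates of the N = binomial(n+d,d) points, is a nonzero polynomial, and each individual coordinate variable of each point appears with degree at most d in it. -/
open MvPolynomial

theorem stmt_7 (n d : ℕ) (hn : 0 < n) (hd : 0 < d)
    (m : Fin ((n + d).choose d) → (Fin n →₀ ℕ))
    (hm : Function.Injective m)
    (hrange : ∀ s : Fin n →₀ ℕ, s ∈ Set.range m ↔ s.degree ≤ d) :
    (Matrix.of fun i j =>
        ∏ k, (X (i, k) : MvPolynomial (Fin ((n + d).choose d) × Fin n) ℤ) ^ (m j k)).det ≠ 0 ∧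
    ∀ (i : Fin ((n + d).choose d)) (k : Fin n),
      ((Matrix.of fun i j =>
        ∏ k, (X (i, k) : MvPolynomial (Fin ((n + d).choose d) × Fin n) ℤ) ^ (m j k)).det).degreeOf
        (i, k) ≤ d := by
  let E : Equiv.Perm (Fin ((n + d).choose d)) → (Fin ((n + d).choose d) × Fin n →₀ ℕ) :=
    fun σ => ∑ i, ∑ k, Finsupp.single ((σ i, k)) (m i k)
  have hEval : ∀ σ (i : Fin ((n + d).choose d)) (k : Fin n), E σ (i, k) = m (σ⁻¹ i) k := by
    intro σ i k
    show (∑ i, ∑ k, Finsupp.single ((σ i, k)) (m i k)) (i, k) = _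
    simp only [Finsupp.finset_sum_apply, Finsupp.single_apply]
    rw [Finset.sum_eq_single (σ⁻¹ i)]
    · rw [Finset.sum_eq_single k]
      · simp
      · intro b _ hb
        rw [if_neg]
        simp only [Prod.mk.injEq, not_and]
        intro _ h
        exact hb h
      · simp
    · intro b _ hb
      apply Finset.sum_eq_zero
      intro c _
      rw [if_neg]
      simp only [Prod.mk.injEq, not_and]
      intro h
      exact absurd (by simp [← h]) hb
    · simp
  have hterm : ∀ σ : Equiv.Perm (Fin ((n + d).choose d)),
      (∏ i, (Matrix.of fun i j =>
        ∏ k, (X (i, k) : MvPolynomial (Fin ((n + d).choose d) × Fin n) ℤ) ^ (m j k)) (σ i) i)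
        = monomial (E σ) 1 := by
    intro σ
    show _ = monomial (∑ i, ∑ k, Finsupp.single ((σ i, k)) (m i k)) 1
    simp only [Matrix.of_apply, X_pow_eq_monomial, ← monomial_sum_one]
  have hdet : (Matrix.of fun i j =>
        ∏ k, (X (i, k) : MvPolynomial (Fin ((n + d).choose d) × Fin n) ℤ) ^ (m j k)).det
      = ∑ σ : Equiv.Perm (Fin ((n + d).choose d)),
          monomial (E σ) ((Equiv.Perm.sign σ : ℤ)) := by
    rw [Matrix.det_apply]
    refine Finset.sum_congr rfl fun σ _ => ?_
    rw [hterm σ, smul_monomial, Units.smul_def, smul_eq_mul, mul_one]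
  have hEinj : Function.Injective E := by
    intro σ τ h
    have h1 : ∀ i, m (σ⁻¹ i) = m (τ⁻¹ i) := by
      intro i
      ext k
      rw [← hEval σ i k, ← hEval τ i k, h]
    have h2 : σ⁻¹ = τ⁻¹ := by
      ext i
      exact congrArg _ (hm (h1 i))
    rw [← inv_inv σ, h2, inv_inv]
  constructor
  · intro h0
    have hc : coeff (E 1) ((Matrix.of fun i j =>
        ∏ k, (X (i, k) : MvPolynomial (Fin ((n + d).choose d) × Fin n) ℤ) ^ (m j k)).det)
        = 1 := by
      rw [hdet, coeff_sum]
      rw [Finset.sum_eq_single (1 : Equiv.Perm (Fin ((n + d).choose d)))]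
      · simp [coeff_monomial]
      · intro σ _ hσ
        rw [coeff_monomial, if_neg (fun h => hσ (hEinj h))]
      · simp
    rw [h0] at hc
    simp at hc
  · intro i k
    rw [degreeOf_le_iff]
    intro s hs
    rw [hdet] at hs
    obtain ⟨σ, -, hσ⟩ := Finset.mem_biUnion.1 (MvPolynomial.support_sum hs)
    have hsE : s = E σ := by simpa using MvPolynomial.support_monomial_subset hσ
    rw [hsE, hEval]
    calc m (σ⁻¹ i) k ≤ (m (σ⁻¹ i)).degree := Finsupp.le_degree _ _
      _ ≤ d := (hrange _).1 ⟨σ⁻¹ i, rfl⟩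
end

section
/- Let K be a field and f_1,...,f_m polynomials in K[X] with gcd 1, forming a minimal generating set of the unit ideal (i.e., removing any one f_i yields a proper ideal). Then for each i there exists an irreducible polynomial g_i dividing f_j for all j distinct from i but not dividing f_i, and the g_i are pairwise non-associate irreducibles; consequently f_i is divisible by the product of the g_j over j distinct from i. -/
open Polynomial

theorem stmt_8 {K : Type*} [Field K] (m : ℕ) (f : Fin m → K[X])
    (hgcd : Ideal.span (Set.range f) = ⊤)
    (hmin : ∀ i : Fin m, Ideal.span (f '' {j | j ≠ i}) ≠ ⊤) :
    ∃ g : Fin m → K[X],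
      (∀ i, Irreducible (g i)) ∧
      (∀ i j, j ≠ i → g i ∣ f j) ∧
      (∀ i, ¬ g i ∣ f i) ∧
      (∀ i j, i ≠ j → ¬ Associated (g i) (g j)) ∧
      (∀ i, (∏ j ∈ Finset.univ.erase i, g j) ∣ f i) := by
  have hKX : ¬ IsField K[X] := Polynomial.not_isField K
  have key : ∀ i : Fin m, ∃ p : K[X], Irreducible p ∧
      Ideal.span (f '' {j | j ≠ i}) ≤ Ideal.span {p} := by
    intro i
    obtain ⟨M, hM, hle⟩ := Ideal.exists_le_maximal _ (hmin i)
    have hMb : M ≠ ⊥ := Ring.ne_bot_of_isMaximal_of_not_isField hM hKX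
    have hprin : M.IsPrincipal := IsPrincipalIdealRing.principal M
    have hpr : M.IsPrime := hM.isPrime
    refine ⟨Submodule.IsPrincipal.generator M,
      (Submodule.IsPrincipal.prime_generator_of_isPrime M hMb).irreducible, ?_⟩
    rw [Ideal.span_singleton_generator M]
    exact hle
  choose g hirr hle using key
  have hdvd : ∀ i j, j ≠ i → g i ∣ f j := by
    intro i j hj
    rw [← Ideal.mem_span_singleton]
    exact hle i (Ideal.subset_span ⟨j, hj, rfl⟩)
  have hndvd : ∀ i, ¬ g i ∣ f i := by
    intro i hdvdi
    have : Ideal.span (Set.range f) ≤ Ideal.span {g i} := by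
      rw [Ideal.span_le]
      rintro _ ⟨j, rfl⟩
      rw [SetLike.mem_coe, Ideal.mem_span_singleton]
      by_cases hji : j = i
      · exact hji ▸ hdvdi
      · exact hdvd i j hji
    rw [hgcd, top_le_iff, Ideal.span_singleton_eq_top] at this
    exact (hirr i).not_isUnit this
  have hassoc : ∀ i j, i ≠ j → ¬ Associated (g i) (g j) := by
    intro i j hij hA
    exact hndvd i (hA.dvd.trans (hdvd j i hij))
  refine ⟨g, hirr, hdvd, hndvd, hassoc, fun i => ?_⟩
  refine Finset.prod_dvd_of_coprime ?_ (fun j hj => hdvd j i (Finset.ne_of_mem_erase hj).symm)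
  intro j hj k hk hjk
  rcases (hirr j).isCoprime_or_dvd (g k) with h | h
  · exact h
  · exact absurd (associated_of_dvd_dvd h ((hirr j).dvd_symm (hirr k) h)) (hassoc j k hjk)
end

section
/- Any minimal generating set of an ideal of K[X_1,...,X_n] consisting of polynomials of degree at most d has size at most binomial(n+d,d). Moreover if such a set has size exactly binomial(n+d,d), then the polynomials are K-linearly independent and span the full space of polynomials of degree at most d; in particular the ideal they generate is the unit ideal. -/
open MvPolynomial

/-- snoc equivalence between bounded-sum tuples and exact-sum tuples -/
def snocEquiv (n d : ℕ) : {P : Fin n → ℕ // ∑ i, P i ≤ d} ≃ {P : Fin (n+1) → ℕ // ∑ i, P i = d} where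
  toFun P := ⟨Fin.snoc P.1 (d - ∑ i, P.1 i), by
    have := P.2
    rw [Fin.sum_univ_castSucc]
    simp only [Fin.snoc_castSucc, Fin.snoc_last]
    omega⟩
  invFun Q := ⟨fun i => Q.1 i.castSucc, by
    show ∑ i : Fin n, Q.1 i.castSucc ≤ d
    have := Q.2
    rw [Fin.sum_univ_castSucc] at this
    omega⟩
  left_inv P := Subtype.ext (funext fun i => by simp)
  right_inv Q := Subtype.ext (funext fun i => by
    induction i using Fin.lastCases with
    | last =>
      have := Q.2
      rw [Fin.sum_univ_castSucc] at this
      simp only [Fin.snoc_last]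
      omega
    | cast i => simp)

noncomputable def bddEquiv (n d : ℕ) :
    {s : Fin n →₀ ℕ // (s.sum fun _ e => e) ≤ d} ≃ Sym (Fin (n+1)) d :=
  ((Finsupp.equivFunOnFinite.subtypeEquiv (fun s => by
      rw [Finsupp.sum_fintype]
      · exact Iff.rfl
      · intro; rfl)).trans (snocEquiv n d)).trans (Sym.equivNatSumOfFintype (Fin (n+1)) d).symm

lemma finrank_rtd (K : Type*) [Field K] (n d : ℕ) :
    Module.finrank K (restrictTotalDegree (Fin n) K d) = (n + d).choose d := by
  haveI : Fintype {s : Fin n →₀ ℕ // (s.sum fun _ e => e) ≤ d} :=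
    Fintype.ofEquiv _ (bddEquiv n d).symm
  have b : Module.Basis {s : Fin n →₀ ℕ // (s.sum fun _ e => e) ≤ d} K
      (restrictTotalDegree (Fin n) K d) := basisRestrictSupport K _
  rw [Module.finrank_eq_card_basis b, Fintype.card_congr (bddEquiv n d),
    Sym.card_sym_eq_choose]
  rw [Fintype.card_fin]
  congr 1
  omega

theorem stmt_11 {K : Type*} [Field K] (n d : ℕ) (hn : 0 < n) (hd : 0 < d)
    (S : Set (MvPolynomial (Fin n) K)) (hdeg : ∀ f ∈ S, f.totalDegree ≤ d)
    (hmin : ∀ S' ⊂ S, Ideal.span S' ≠ Ideal.span S) :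
    S.Finite ∧ S.ncard ≤ (n + d).choose d ∧
    (S.ncard = (n + d).choose d →
      LinearIndependent K (fun f : S => (f : MvPolynomial (Fin n) K)) ∧
      Submodule.span K S = restrictTotalDegree (Fin n) K d ∧
      Ideal.span S = ⊤) := by
  set T := restrictTotalDegree (Fin n) K d with hT
  have hST : S ⊆ (T : Set (MvPolynomial (Fin n) K)) := fun f hf =>
    (mem_restrictTotalDegree (Fin n) d f).mpr (hdeg f hf)
  have hKspan : ∀ s : Set (MvPolynomial (Fin n) K),
      Submodule.span K s ≤ (Ideal.span s).restrictScalars K := fun s =>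
    Submodule.span_le.mpr fun x hx => Ideal.subset_span hx
  -- linear independence
  have hli : LinearIndependent K (fun f : S => (f : MvPolynomial (Fin n) K)) := by
    rw [linearIndependent_iff_notMem_span]
    rintro ⟨f, hf⟩ hmem
    have himg : (fun g : S => (g : MvPolynomial (Fin n) K)) ''
        (Set.univ \ {(⟨f, hf⟩ : S)}) = S \ {f} := by
      ext x
      constructor
      · rintro ⟨⟨y, hy⟩, ⟨-, hne⟩, rfl⟩
        refine ⟨hy, fun h => hne ?_⟩
        simp only [Set.mem_singleton_iff] at h ⊢
        exact Subtype.ext h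
      · rintro ⟨hx, hne⟩
        refine ⟨⟨x, hx⟩, ⟨trivial, fun h => hne ?_⟩, rfl⟩
        simp only [Set.mem_singleton_iff] at h ⊢
        exact congrArg Subtype.val h
    rw [himg] at hmem
    have h1 : f ∈ Ideal.span (S \ {f}) := hKspan _ hmem
    have h2 : Ideal.span (S \ {f}) = Ideal.span S := by
      conv_rhs => rw [show S = insert f (S \ {f}) from
        (Set.insert_diff_singleton.trans (Set.insert_eq_of_mem hf)).symm]
      exact (Submodule.span_insert_eq_span h1).symm
    exact hmin (S \ {f}) (Set.sdiff_singleton_ssubset.mpr hf) h2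
  -- lift to T
  let v : S → T := fun f => ⟨f.1, hST f.2⟩
  have hliT : LinearIndependent K v :=
    LinearIndependent.of_comp T.subtype hli
  have hfinS : Finite ↥S := hliT.finite
  have hfin : S.Finite := S.toFinite
  haveI : Fintype ↥S := hfin.fintype
  have hncard : S.ncard = Fintype.card ↥S := by
    rw [← Nat.card_coe_set_eq, Nat.card_eq_fintype_card]
  refine ⟨hfin, ?_, ?_⟩
  · rw [hncard, ← finrank_rtd K n d]
    exact hliT.fintype_card_le_finrank
  · intro heq
    have hcardeq : Fintype.card ↥S = Module.finrank K T := by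
      rw [← hncard, heq, finrank_rtd K n d]
    have hspanT : Submodule.span K (Set.range v) = ⊤ :=
      hliT.span_eq_top_of_card_eq_finrank' hcardeq
    have himg : T.subtype '' Set.range v = S := by
      ext x
      constructor
      · rintro ⟨y, ⟨f, rfl⟩, rfl⟩; exact f.2
      · intro hx; exact ⟨v ⟨x, hx⟩, ⟨⟨x, hx⟩, rfl⟩, rfl⟩
    have hspan : Submodule.span K S = T := by
      have h1 := Submodule.map_span T.subtype (Set.range v)
      rw [hspanT, Submodule.map_subtype_top, himg] at h1
      exact h1.symm
    refine ⟨hli, hspan, ?_⟩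
    rw [Ideal.eq_top_iff_one]
    have h1T : (1 : MvPolynomial (Fin n) K) ∈ T := by
      rw [hT, mem_restrictTotalDegree]
      simp [totalDegree_one]
    have : (1 : MvPolynomial (Fin n) K) ∈ Submodule.span K S := hspan ▸ h1T
    exact hKspan S this
end

section
/- For each fixed prime power q, the maximum size lambda_q(d) of a minimal generating set of an ideal in F_q[X] whose elements all have degree at most d satisfies lambda_q(d) = Theta(d / log d) as d tends to infinity, with implied constants depending on q. -/
open Polynomial

lemma card_le_of_natDegree_le {K : Type*} [Field K] [Fintype K] {D : ℕ} (T : Finset K[X])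
    (hT : ∀ p ∈ T, p.natDegree ≤ D) : T.card ≤ Fintype.card K ^ (D + 1) := by
  classical
  have h := Finset.card_le_card_of_injOn (s := T) (t := (Finset.univ : Finset (Fin (D+1) → K)))
    (fun (p : K[X]) (k : Fin (D+1)) => p.coeff k) (fun p _ => Finset.mem_univ _) ?_
  · simpa [Fintype.card_fun] using h
  · intro p hp p' hp' h
    ext n
    by_cases hn : n ≤ D
    · exact congrFun h ⟨n, by omega⟩
    · rw [Polynomial.coeff_eq_zero_of_natDegree_lt (by have := hT p hp; omega),
        Polynomial.coeff_eq_zero_of_natDegree_lt (by have := hT p' hp'; omega)]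

lemma upper_core {K : Type*} [Field K] [Fintype K] {d D m : ℕ}
    (f : Fin m → K[X]) (hdeg : ∀ i, (f i).natDegree ≤ d)
    (hmin : ∀ S : Set (Fin m), Ideal.span (f '' S) = Ideal.span (Set.range f) → S = Set.univ) :
    m ≤ 1 + Fintype.card K ^ (D + 1) + d / (D + 1) := by
  classical
  rcases Nat.lt_or_ge m 2 with hm | hm
  · have h1 : m ≤ 1 := by omega
    exact h1.trans ((Nat.le_add_right 1 _).trans (Nat.le_add_right _ _))
  have hm0 : 0 < m := by omega
  -- every f i is nonzero
  have hf0 : ∀ i, f i ≠ 0 := by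
    intro i hi
    have hsp : Ideal.span (f '' {i}ᶜ) = Ideal.span (Set.range f) := by
      have hr : Set.range f = f '' {i}ᶜ ∪ {0} := by
        rw [← Set.image_univ, ← Set.union_compl_self {i}, Set.union_comm, Set.image_union]
        congr 1
        simp [hi]
      rw [hr, Ideal.span_union, Ideal.span_singleton_eq_bot.2 rfl, sup_bot_eq]
    have := hmin _ hsp
    have : (i : Fin m) ∈ ({i}ᶜ : Set (Fin m)) := this ▸ Set.mem_univ i
    simp at this
  set I := Ideal.span (Set.range f) with hI
  obtain ⟨g, hg⟩ := (IsPrincipalIdealRing.principal I).principal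
  rw [Ideal.submodule_span_eq] at hg
  have hmemI : ∀ x, x ∈ I ↔ g ∣ x := by
    intro x; rw [hI] at hg ⊢; rw [hg, Ideal.mem_span_singleton]
  have hgf : ∀ j, g ∣ f j := fun j => (hmemI _).1 (Ideal.subset_span ⟨j, rfl⟩)
  have hgne : g ≠ 0 := by
    intro h; exact hf0 ⟨0, hm0⟩ (zero_dvd_iff.1 (h ▸ hgf ⟨0, hm0⟩))
  -- key: a poly p with g * p dividing all f j is a unit
  have hkey : ∀ p : K[X], (∀ j, g * p ∣ f j) → IsUnit p := by
    intro p hp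
    have hIle : I ≤ Ideal.span {g * p} := by
      rw [hI, Ideal.span_le]
      rintro x ⟨j, rfl⟩
      exact Ideal.mem_span_singleton.2 (hp j)
    have hgm : g ∈ I := by rw [hI] at hg ⊢; rw [hg]; exact Ideal.mem_span_singleton_self g
    have : g * p ∣ g * 1 := by simpa using Ideal.mem_span_singleton.1 (hIle hgm)
    exact isUnit_of_dvd_one ((mul_dvd_mul_iff_left hgne).1 this)
  -- construct the primes
  have hPe : ∀ i : Fin m, ∃ p : K[X], p.Monic ∧ Irreducible p ∧ ∀ j, j ≠ i → g * p ∣ f j := by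
    intro i
    set Ii := Ideal.span (f '' {i}ᶜ) with hIidef
    obtain ⟨gi, hgi⟩ := (IsPrincipalIdealRing.principal Ii).principal
    rw [Ideal.submodule_span_eq] at hgi
    have hmemIi : ∀ x, x ∈ Ii ↔ gi ∣ x := by
      intro x; rw [hgi, Ideal.mem_span_singleton]
    have hgif : ∀ j, j ≠ i → gi ∣ f j := by
      intro j hj
      exact (hmemIi _).1 (Ideal.subset_span ⟨j, by simp [hj], rfl⟩)
    have hIle : Ii ≤ I := Ideal.span_mono (Set.image_subset_range f _)
    have hne : Ii ≠ I := by
      intro h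
      have := hmin _ h
      have : (i : Fin m) ∈ ({i}ᶜ : Set (Fin m)) := this ▸ Set.mem_univ i
      simp at this
    have hggi : g ∣ gi := by
      refine (hmemI _).1 (hIle ?_)
      rw [hgi]; exact Ideal.mem_span_singleton_self gi
    have hnd : ¬ gi ∣ g := by
      intro hd
      refine hne (le_antisymm hIle ?_)
      intro x hx
      rw [hmemIi]
      exact hd.trans ((hmemI _).1 hx)
    obtain ⟨t, ht⟩ := hggi
    have htu : ¬ IsUnit t := by
      intro hu
      exact hnd (ht ▸ (hu.mul_right_dvd.2 dvd_rfl))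
    have hgine : gi ≠ 0 := by
      haveI : Nontrivial (Fin m) := ⟨⟨⟨0, by omega⟩, ⟨1, by omega⟩, by simp [Fin.ext_iff]⟩⟩
      obtain ⟨j, hj⟩ : ∃ j : Fin m, j ≠ i := exists_ne i
      intro h0
      exact hf0 j (zero_dvd_iff.1 (h0 ▸ hgif j hj))
    have htne : t ≠ 0 := by rintro rfl; simp at ht; exact hgine ht
    obtain ⟨π, hπirr, hπdvd⟩ := WfDvdMonoid.exists_irreducible_factor htu htne
    have hπne : π ≠ 0 := hπirr.ne_zero
    refine ⟨normalize π, monic_normalize hπne, (associated_normalize π).irreducible hπirr, ?_⟩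
    intro j hj
    have : g * normalize π ∣ gi := by
      rw [ht]
      exact mul_dvd_mul_left g ((normalize_dvd_iff).2 hπdvd)
    exact this.trans (hgif j hj)
  choose P hPmon hPirr hPdvd using hPe
  -- P is injective
  have hPinj : Function.Injective P := by
    intro i j hij
    by_contra hne
    refine (hPirr i).not_isUnit (hkey (P i) ?_)
    intro k
    rcases eq_or_ne k i with rfl | hki
    · rw [hij]; exact hPdvd j k hne
    · exact hPdvd i k hki
  -- degree bound
  set z : Fin m := ⟨0, hm0⟩ with hz
  set s : Finset (Fin m) := Finset.univ.erase z with hs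
  obtain ⟨h0, hh0⟩ := hgf z
  have hPdvd0 : ∀ i ∈ s, P i ∣ h0 := by
    intro i hi
    have hine : i ≠ z := Finset.ne_of_mem_erase hi
    have h1 := hPdvd i z (Ne.symm hine)
    rw [hh0] at h1
    exact (mul_dvd_mul_iff_left hgne).1 h1
  have hcop : (↑s : Set (Fin m)).Pairwise (Function.onFun IsCoprime P) := by
    intro i _ j _ hij
    have hPne : P i ≠ P j := fun h => hij (hPinj h)
    refine ((hPirr i).coprime_iff_not_dvd).2 ?_
    intro hdvd
    exact hPne (eq_of_monic_of_associated (hPmon i) (hPmon j)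
      ((hPirr i).associated_of_dvd (hPirr j) hdvd))
  have hproddvd : ∏ i ∈ s, P i ∣ h0 := Finset.prod_dvd_of_coprime hcop hPdvd0
  have hdegsum : ∑ i ∈ s, (P i).natDegree ≤ d := by
    have h1 : (∏ i ∈ s, P i).natDegree ≤ (f z).natDegree :=
      Polynomial.natDegree_le_of_dvd (hproddvd.trans ⟨g, by rw [hh0]; ring⟩) (hf0 _)
    have h2 : (∏ i ∈ s, P i).natDegree = ∑ i ∈ s, (P i).natDegree :=
      Polynomial.natDegree_prod _ _ (fun i _ => (hPirr i).ne_zero)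
    have h3 := hdeg z
    omega
  -- counting
  set s1 := s.filter (fun i => (P i).natDegree ≤ D) with hs1
  set s2 := s.filter (fun i => ¬ (P i).natDegree ≤ D) with hs2
  have hcards : s1.card + s2.card = s.card := Finset.card_filter_add_card_filter_not _
  have hcard1 : s1.card ≤ Fintype.card K ^ (D+1) := by
    rw [← Finset.card_image_of_injective s1 hPinj]
    refine card_le_of_natDegree_le _ ?_
    intro p hp
    obtain ⟨i, hi, rfl⟩ := Finset.mem_image.1 hp
    exact (Finset.mem_filter.1 hi).2
  have hcard2 : s2.card ≤ d / (D+1) := by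
    rw [Nat.le_div_iff_mul_le (Nat.succ_pos D)]
    calc s2.card * (D+1) = ∑ _i ∈ s2, (D+1) := by rw [Finset.sum_const, smul_eq_mul]
      _ ≤ ∑ i ∈ s2, (P i).natDegree := by
          refine Finset.sum_le_sum ?_
          intro i hi
          have := (Finset.mem_filter.1 hi).2
          omega
      _ ≤ ∑ i ∈ s, (P i).natDegree :=
          Finset.sum_le_sum_of_subset (Finset.filter_subset _ _)
      _ ≤ d := hdegsum
  have hscard : s.card = m - 1 := by
    rw [hs, Finset.card_erase_of_mem (Finset.mem_univ _), Finset.card_univ, Fintype.card_fin]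
  omega

lemma exists_many_irreducibles (K : Type*) [Field K] [Fintype K] (D : ℕ) (hD : 1 ≤ D) :
    ∃ T : Finset K[X], (∀ b ∈ T, b.Monic ∧ Irreducible b ∧ b.natDegree ≤ D) ∧
      Fintype.card K ^ D ≤ D * T.card := by
  classical
  set q := Fintype.card K with hq
  have hq1 : 1 < q := Fintype.one_lt_card
  obtain ⟨p, hcharp⟩ := CharP.exists K
  haveI : CharP K p := hcharp
  obtain ⟨n, hpprime, hcard⟩ := FiniteField.card K p
  haveI : Fact p.Prime := ⟨hpprime⟩
  set M := q ^ D with hM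
  have hMp : M = p ^ ((n : ℕ) * D) := by rw [hM, hq, hcard, ← pow_mul]
  have hM0 : M ≠ 0 := by positivity
  set g : K[X] := X ^ M - X with hg
  set F := g.SplittingField with hF
  haveI : CharP F p := charP_of_injective_algebraMap (algebraMap K F).injective p
  have hsep : g.Separable := by
    rw [hg]
    exact galois_poly_separable p M (by rw [hMp]; exact dvd_pow_self p (by positivity))
  have hgnd : g.natDegree = M := by
    rw [hg, hM]
    exact FiniteField.X_pow_card_pow_sub_X_natDegree_eq _ (by omega) hq1
  have hcardroot : Fintype.card (g.rootSet F) = M := by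
    rw [card_rootSet_eq_natDegree hsep (SplittingField.splits g), hgnd]
  -- the subfield of elements fixed by x ↦ x^M
  have hMadd : ∀ x y : F, (x + y) ^ M = x ^ M + y ^ M := by
    intro x y; rw [hMp]; exact add_pow_char_pow x y p (↑n * D)
  let E : Subfield F :=
    { carrier := {x : F | x ^ M = x}
      mul_mem' := by intro a b ha hb; simp only [Set.mem_setOf_eq] at *; rw [mul_pow, ha, hb]
      one_mem' := by simp
      add_mem' := by
        intro a b ha hb; simp only [Set.mem_setOf_eq] at *; rw [hMadd, ha, hb]
      zero_mem' := by
        simp only [Set.mem_setOf_eq]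
        exact zero_pow (by positivity)
      neg_mem' := by
        intro a ha; simp only [Set.mem_setOf_eq] at *
        have h2 : (0 - a) ^ M = 0 ^ M - a ^ M := by
          rw [hMp]; exact sub_pow_char_pow (p := p) 0 a (↑n * D)
        rw [zero_sub, zero_pow hM0, zero_sub] at h2
        rw [h2, ha]
      inv_mem' := by
        intro a ha; simp only [Set.mem_setOf_eq] at *
        rw [inv_pow, ha] }
  have hEK : ∀ x : K, algebraMap K F x ∈ E := by
    intro x
    have : x ^ M = x := by rw [hM]; exact FiniteField.pow_card_pow D x
    show (algebraMap K F x) ^ M = algebraMap K F x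
    rw [← map_pow, this]
  let E' : IntermediateField K F := Subfield.toIntermediateField E hEK
  have hmemE' : ∀ x : F, x ∈ E' ↔ x ^ M = x := fun x => Iff.rfl
  haveI : FiniteDimensional K F := inferInstance
  haveI : FiniteDimensional K E' := inferInstance
  haveI : Finite F := Module.finite_of_finite K
  haveI : Fintype F := Fintype.ofFinite F
  haveI : Fintype E' := Fintype.ofFinite E'
  -- every element of E' is a root of g
  have hroot : ∀ x : F, x ∈ E' → x ∈ g.rootSet F := by
    intro x hx
    have hgne : g ≠ 0 := by
      rw [hg, hM]; exact FiniteField.X_pow_card_pow_sub_X_ne_zero _ (by omega) hq1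
    rw [mem_rootSet_of_ne hgne]
    show aeval x (X ^ M - X) = 0
    rw [map_sub, map_pow, aeval_X, (hmemE' x).1 hx, sub_self]
  have hcardE' : Fintype.card E' ≤ M := by
    rw [← hcardroot]
    refine Fintype.card_le_of_injective (fun x => ⟨x.1, hroot x.1 x.2⟩) ?_
    intro a b hab
    simp only [Subtype.mk.injEq] at hab
    exact Subtype.ext hab
  have hfinrank : Module.finrank K E' ≤ D := by
    have h1 : q ^ Module.finrank K E' ≤ q ^ D := by
      rw [← hM]
      calc q ^ Module.finrank K E' = Fintype.card E' := (Module.card_eq_pow_finrank).symm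
        _ ≤ M := hcardE'
    exact (Nat.pow_le_pow_iff_right hq1).1 h1
  -- minpoly of each root has degree ≤ D
  have hminpoly : ∀ x : F, x ∈ g.rootSet F → (minpoly K x).natDegree ≤ D ∧
      (minpoly K x).Monic ∧ Irreducible (minpoly K x) := by
    intro x hx
    have hxE : x ∈ E' := by
      rw [hmemE']
      have h2 : aeval x ((X : K[X]) ^ M - X) = 0 := (mem_rootSet.1 hx).2
      simp only [map_sub, map_pow, aeval_X] at h2
      exact sub_eq_zero.1 h2
    have hint : IsIntegral K x := IsIntegral.of_finite K x
    have heq : minpoly K (⟨x, hxE⟩ : E') = minpoly K x := by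
      rw [← minpoly.algebraMap_eq (algebraMap E' F).injective ⟨x, hxE⟩]
      rfl
    refine ⟨?_, minpoly.monic hint, minpoly.irreducible hint⟩
    rw [← heq]
    exact le_trans (minpoly.natDegree_le _) hfinrank
  -- count via fibers
  set t : Finset F := (g.rootSet F).toFinset with ht
  have htcard : t.card = M := by rw [ht, Set.toFinset_card, hcardroot]
  set T : Finset K[X] := t.image (fun x => minpoly K x) with hT
  refine ⟨T, ?_, ?_⟩
  · intro b hb
    obtain ⟨x, hx, rfl⟩ := Finset.mem_image.1 hb
    obtain ⟨h1, h2, h3⟩ := hminpoly x (Set.mem_toFinset.1 hx)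
    exact ⟨h2, h3, h1⟩
  · have := Finset.card_le_mul_card_image (f := fun x => minpoly K x) t D ?_
    · rw [htcard] at this; exact this.trans (le_refl _)
    · intro b hb
      obtain ⟨x0, hx0, rfl⟩ := Finset.mem_image.1 hb
      obtain ⟨h1, h2, h3⟩ := hminpoly x0 (Set.mem_toFinset.1 hx0)
      have hbne : (minpoly K x0) ≠ 0 := h3.ne_zero
      have hmapne : (minpoly K x0).map (algebraMap K F) ≠ 0 :=
        Polynomial.map_ne_zero hbne
      calc (t.filter (fun a => minpoly K a = minpoly K x0)).card
          ≤ ((minpoly K x0).map (algebraMap K F)).roots.toFinset.card := by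
            refine Finset.card_le_card ?_
            intro a ha
            obtain ⟨hat, hamin⟩ := Finset.mem_filter.1 ha
            rw [Multiset.mem_toFinset, mem_roots hmapne]
            rw [IsRoot, eval_map, ← aeval_def, ← hamin]
            exact minpoly.aeval K a
        _ ≤ ((minpoly K x0).map (algebraMap K F)).roots.card := Multiset.toFinset_card_le _
        _ ≤ ((minpoly K x0).map (algebraMap K F)).natDegree := Polynomial.card_roots' _
        _ ≤ D := by rw [Polynomial.natDegree_map]; exact h1

lemma lower_core {K : Type*} [Field K] {d D m : ℕ} (hm : 0 < m) (P : Fin m → K[X])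
    (hinj : Function.Injective P) (hmon : ∀ i, (P i).Monic) (hirr : ∀ i, Irreducible (P i))
    (hdegP : ∀ i, (P i).natDegree ≤ D) (hdm : m * D ≤ d) :
    ∃ f : Fin m → K[X], (∀ i, (f i).natDegree ≤ d) ∧
      (∀ S : Set (Fin m), Ideal.span (f '' S) = Ideal.span (Set.range f) → S = Set.univ) := by
  classical
  set f : Fin m → K[X] := fun i => ∏ j ∈ Finset.univ.erase i, P j with hf
  have hfmon : ∀ i, (f i).Monic := fun i => monic_prod_of_monic _ _ (fun j _ => hmon j)
  have hPne : ∀ i, P i ≠ 0 := fun i => (hirr i).ne_zero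
  refine ⟨f, ?_, ?_⟩
  · intro i
    calc (f i).natDegree = ∑ j ∈ Finset.univ.erase i, (P j).natDegree :=
          natDegree_prod _ _ (fun j _ => hPne j)
      _ ≤ ∑ _j ∈ Finset.univ.erase i, D := Finset.sum_le_sum (fun j _ => hdegP j)
      _ = (Finset.univ.erase i).card * D := by rw [Finset.sum_const, smul_eq_mul]
      _ ≤ m * D := Nat.mul_le_mul_right D ((Finset.card_erase_le).trans (by simp))
      _ ≤ d := hdm
  · have htop : Ideal.span (Set.range f) = ⊤ := by
      by_contra hne
      obtain ⟨I, hImax, hle⟩ := Ideal.exists_le_maximal _ hne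
      obtain ⟨π, hπ⟩ := (IsPrincipalIdealRing.principal I).principal
      rw [Ideal.submodule_span_eq] at hπ
      have hdvd : ∀ i, π ∣ f i := fun i =>
        Ideal.mem_span_singleton.1 (hπ ▸ hle (Ideal.subset_span ⟨i, rfl⟩))
      have hπu : ¬ IsUnit π := by
        intro hu
        exact hImax.ne_top (by rw [hπ]; exact Ideal.span_singleton_eq_top.2 hu)
      set i0 : Fin m := ⟨0, hm⟩ with hi0
      have hπne : π ≠ 0 := by
        intro h0
        exact (hfmon i0).ne_zero (zero_dvd_iff.1 (h0 ▸ hdvd i0))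
      have hπprime : Prime π := (Ideal.span_singleton_prime hπne).1 (hπ ▸ hImax.isPrime)
      obtain ⟨j0, hj0mem, hj0⟩ := hπprime.exists_mem_finset_dvd (hdvd i0)
      obtain ⟨j1, hj1mem, hj1⟩ := hπprime.exists_mem_finset_dvd (hdvd j0)
      have ha0 : Associated π (P j0) := hπprime.irreducible.associated_of_dvd (hirr j0) hj0
      have ha1 : Associated π (P j1) := hπprime.irreducible.associated_of_dvd (hirr j1) hj1
      have : P j0 = P j1 := eq_of_monic_of_associated (hmon j0) (hmon j1) (ha0.symm.trans ha1)
      exact (Finset.ne_of_mem_erase hj1mem) (hinj this.symm)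
    intro S hS
    by_contra hSne
    obtain ⟨i, hiS⟩ := (Set.ne_univ_iff_exists_notMem S).1 hSne
    have hle : Ideal.span (f '' S) ≤ Ideal.span {P i} := by
      rw [Ideal.span_le]
      rintro x ⟨j, hjS, rfl⟩
      refine Ideal.mem_span_singleton.2 (Finset.dvd_prod_of_mem P ?_)
      refine Finset.mem_erase.2 ⟨?_, Finset.mem_univ i⟩
      rintro rfl
      exact hiS hjS
    rw [hS, htop] at hle
    exact (hirr i).not_isUnit (Ideal.span_singleton_eq_top.1 (top_le_iff.1 hle))

/-- `lambdaMax K d` is the supremum of sizes of minimal generating sets of ideals of `K[X]`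
all of whose elements have degree at most `d`. -/
noncomputable def lambdaMax (K : Type*) [Field K] (d : ℕ) : ℕ :=
  sSup {m : ℕ | ∃ f : Fin m → K[X],
    (∀ i, (f i).natDegree ≤ d) ∧
    (∀ S : Set (Fin m), Ideal.span (f '' S) = Ideal.span (Set.range f) → S = Set.univ)}

lemma lambdaMax_le {K : Type*} [Field K] [Fintype K] (d D : ℕ) :
    lambdaMax K d ≤ 1 + Fintype.card K ^ (D + 1) + d / (D + 1) := by
  refine csSup_le' ?_
  rintro m ⟨f, h1, h2⟩
  exact upper_core f h1 h2

lemma le_lambdaMax {K : Type*} [Field K] [Fintype K] {d m : ℕ}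
    (h : ∃ f : Fin m → K[X],
      (∀ i, (f i).natDegree ≤ d) ∧
      (∀ S : Set (Fin m), Ideal.span (f '' S) = Ideal.span (Set.range f) → S = Set.univ)) :
    m ≤ lambdaMax K d := by
  refine le_csSup ⟨1 + Fintype.card K ^ (d + 1) + d / (d + 1), ?_⟩ h
  rintro k ⟨f, h1, h2⟩
  exact upper_core f h1 h2

set_option maxHeartbeats 2000000 in
theorem stmt_14 {K : Type*} [Field K] [Fintype K] :
    ∃ c C : ℝ, 0 < c ∧ 0 < C ∧ ∃ N : ℕ, ∀ d : ℕ, N ≤ d →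
      c * (d / Real.log d) ≤ (lambdaMax K d : ℝ) ∧
      (lambdaMax K d : ℝ) ≤ C * (d / Real.log d) := by
  classical
  set q := Fintype.card K with hqdef
  clear_value q
  have hq2 : 2 ≤ q := by rw [hqdef]; exact Fintype.one_lt_card
  have hqR : (2:ℝ) ≤ (q:ℝ) := by exact_mod_cast hq2
  have hq0 : (0:ℝ) < q := by linarith
  have hlogq : 0 < Real.log q := Real.log_pos (by linarith)
  refine ⟨Real.log q / (4*q), 1 + 2*Real.log q, by positivity, by positivity,
    (32*q)^2 + (8*q)^4 + q + 2, ?_⟩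
  intro d hd
  have hdq : q ≤ d := by omega
  have hd2 : 2 ≤ d := by omega
  have hd32 : (32*q)^2 ≤ d := by omega
  have hd84 : (8*q)^4 ≤ d := by omega
  have hdR2 : (2:ℝ) ≤ (d:ℝ) := by exact_mod_cast hd2
  have hdR0 : (0:ℝ) < d := by linarith
  have hL : 0 < Real.log d := Real.log_pos (by linarith)
  set L := Real.log d with hLdef
  -- quarter-power and square root facts
  set r : ℝ := (d:ℝ) ^ ((1:ℝ)/4) with hrdef
  have hr0 : 0 < r := Real.rpow_pos_of_pos hdR0 _
  set sd : ℝ := Real.sqrt d with hsddef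
  have hsd0 : 0 < sd := Real.sqrt_pos.2 hdR0
  have hsdsq : sd * sd = d := Real.mul_self_sqrt (le_of_lt hdR0)
  have hsdr : r * r = sd := by
    rw [hsddef, Real.sqrt_eq_rpow, hrdef, ← Real.rpow_add hdR0]
    norm_num
  have hL4 : L ≤ 4 * r := by
    have h := Real.log_le_rpow_div (le_of_lt hdR0) (by norm_num : (0:ℝ) < 1/4)
    rw [hLdef, hrdef]
    calc Real.log d ≤ (d:ℝ)^((1:ℝ)/4) / (1/4) := h
      _ = 4 * (d:ℝ)^((1:ℝ)/4) := by ring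
  have hr8q : 8*(q:ℝ) ≤ r := by
    have h1 : ((8*(q:ℝ)) ^ (4:ℕ)) = (((8*q)^4 : ℕ):ℝ) := by push_cast; ring
    have h2 : (((8*q)^4 : ℕ):ℝ) ^ ((1:ℝ)/4) ≤ r := by
      rw [hrdef]
      exact Real.rpow_le_rpow (by positivity) (by exact_mod_cast hd84) (by norm_num)
    have key : (8*(q:ℝ)) = ((((8*q)^4 : ℕ)):ℝ) ^ ((1:ℝ)/4) := by
      rw [← h1, ← Real.rpow_natCast (8*(q:ℝ)) 4, ← Real.rpow_mul (by positivity)]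
      norm_num
    rw [key]
    exact h2
  constructor
  · -- LOWER BOUND
    set t := Nat.log q d with htdef
    clear_value t
    have ht1 : 1 ≤ t := by rw [htdef]; exact Nat.log_pos (by omega) hdq
    have ht0R : (0:ℝ) < t := by exact_mod_cast ht1
    have hqt_le : q ^ t ≤ d := by rw [htdef]; exact Nat.pow_log_le_self q (by omega)
    have hlt : d < q ^ (t+1) := by rw [htdef]; exact Nat.lt_pow_succ_log_self (by omega) d
    set m := d / (2*q*t) with hmdef
    clear_value m
    have htL : (t:ℝ) * Real.log q ≤ L := by
      rw [hLdef]
      calc (t:ℝ) * Real.log q = Real.log ((q:ℝ)^t) := (Real.log_pow (q:ℝ) t).symm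
        _ ≤ Real.log d := Real.log_le_log (by positivity) (by exact_mod_cast hqt_le)
    -- d < 2qt(m+1)
    have hA : (d:ℝ) < 2*q*t * ((m:ℝ)+1) := by
      have := Nat.lt_mul_div_succ d (show 0 < 2*q*t by positivity)
      rw [hmdef]
      exact_mod_cast this
    -- d / L ≥ 8 q
    have hdL8q : 8*(q:ℝ) ≤ (d:ℝ)/L := by
      have h1 : L ≤ 4 * sd := by
        refine hL4.trans ?_
        have : r ≤ sd := by
          nlinarith [hr8q, hqR, hsdr, hr0]
        linarith
      have h2 : 32*(q:ℝ) ≤ sd := by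
        rw [hsddef]
        rw [show ((32:ℝ)*q) = ((32*q : ℕ):ℝ) by push_cast; ring]
        refine (Real.le_sqrt (by positivity) (by positivity)).2 ?_
        rw [show ((32*q:ℕ):ℝ)^2 = (((32*q)^2 : ℕ):ℝ) by push_cast; ring]
        exact_mod_cast hd32
      rw [le_div_iff₀ hL]
      nlinarith [h1, h2, hsd0, hL, hsdsq, hq0]
    set X : ℝ := (d:ℝ) * Real.log q / (2*q*L) with hXdef
    have hlog2 : (1:ℝ)/2 ≤ Real.log q := by
      have hl2 := Real.log_two_gt_d9
      have h2q : Real.log 2 ≤ Real.log q := Real.log_le_log (by norm_num) hqR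
      linarith
    have hd8qL : 8*(q:ℝ)*L ≤ d := by
      rw [le_div_iff₀ hL] at hdL8q
      linarith
    have hX2 : 2 ≤ X := by
      rw [hXdef, le_div_iff₀ (by positivity : (0:ℝ) < 2*(q:ℝ)*L)]
      have hp1 : 8*(q:ℝ)*L*(1/2) ≤ (d:ℝ)*Real.log q :=
        mul_le_mul hd8qL hlog2 (by norm_num) (by positivity)
      linarith
    have hmX : X - 1 < (m:ℝ) := by
      have h1 : (d:ℝ)*Real.log q < 2*q*L*((m:ℝ)+1) := by
        have h2 : (d:ℝ)*Real.log q < 2*q*(t:ℝ)*((m:ℝ)+1)*Real.log q :=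
          mul_lt_mul_of_pos_right hA hlogq
        have h3' : 2*(q:ℝ)*((m:ℝ)+1)*((t:ℝ)*Real.log q) ≤ 2*q*((m:ℝ)+1)*L :=
          mul_le_mul_of_nonneg_left htL (by positivity)
        ring_nf at h2 h3' ⊢
        linarith
      have h4 : X < (m:ℝ)+1 := by
        rw [hXdef, div_lt_iff₀ (by positivity : (0:ℝ) < 2*(q:ℝ)*L)]
        linarith [h1]
      linarith
    have hm1R : (1:ℝ) < (m:ℝ) := by linarith
    have hmpos : 0 < m := by exact_mod_cast lt_trans zero_lt_one hm1R
    -- get irreducibles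
    obtain ⟨T, hTprop, hTcount⟩ := exists_many_irreducibles K t ht1
    rw [← hqdef] at hTcount
    have hmt : m * t ≤ d / (2*q) := by
      have : m = d / (2*q) / t := by rw [hmdef, Nat.div_div_eq_div_mul]
      rw [this]
      exact Nat.div_mul_le_self _ _
    have hd2q : d / (2*q) ≤ q ^ t := by
      have h1 : d / (2*q) ≤ d / q := Nat.div_le_div_left (by omega) (by omega)
      have h2 : d / q < q^t + 1 := by
        rw [Nat.div_lt_iff_lt_mul (by omega)]
        calc d < q^(t+1) := hlt
          _ = q^t * q := by rw [pow_succ]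
          _ ≤ (q^t+1) * q := Nat.mul_le_mul_right q (by omega)
      omega
    have hmT : m ≤ T.card := by
      have h1 : m * t ≤ t * T.card := le_trans (hmt.trans hd2q) hTcount
      rw [Nat.mul_comm m t] at h1
      exact Nat.le_of_mul_le_mul_left h1 (by omega)
    set P : Fin m → K[X] := fun i => (T.equivFin.symm (Fin.castLE hmT i)).1 with hPdef
    have hPinj : Function.Injective P := by
      intro a b hab
      have h1 := T.equivFin.symm.injective (Subtype.ext hab)
      exact Fin.castLE_injective hmT h1
    have hPmem : ∀ i, P i ∈ T := fun i => (T.equivFin.symm (Fin.castLE hmT i)).2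
    have hex := lower_core (d := d) (D := t) hmpos P hPinj
      (fun i => (hTprop _ (hPmem i)).1) (fun i => (hTprop _ (hPmem i)).2.1)
      (fun i => (hTprop _ (hPmem i)).2.2)
      (le_trans (hmt.trans hd2q) (hqt_le))
    have hlam := le_lambdaMax hex
    have hlamR : (m:ℝ) ≤ (lambdaMax K d : ℝ) := by exact_mod_cast hlam
    have hgoal : Real.log q / (4*q) * ((d:ℝ)/L) = X/2 := by
      rw [hXdef]; field_simp; ring
    rw [hgoal]
    linarith [hmX, hX2, hlamR]
  · -- UPPER BOUND
    set t := Nat.log q d with htdef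
    clear_value t
    have hqt_le : q ^ t ≤ d := by rw [htdef]; exact Nat.pow_log_le_self q (by omega)
    have hlt : d < q ^ (t+1) := by rw [htdef]; exact Nat.lt_pow_succ_log_self (by omega) d
    set D := t/2 with hDdef
    clear_value D
    have hbound := lambdaMax_le (K := K) d D
    rw [← hqdef] at hbound
    have hboundR : (lambdaMax K d : ℝ) ≤ 1 + (q:ℝ)^(D+1) + ((d / (D+1) : ℕ):ℝ) := by
      have := hbound
      have hc : ((1 + q ^ (D + 1) + d / (D + 1) : ℕ):ℝ) = 1 + (q:ℝ)^(D+1) + ((d / (D+1) : ℕ):ℝ) := by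
        push_cast; ring
      calc (lambdaMax K d : ℝ) ≤ ((1 + q ^ (D + 1) + d / (D + 1) : ℕ):ℝ) := by exact_mod_cast this
        _ = _ := hc
    -- (a) q^(D+1) ≤ q * sd
    have ha : (q:ℝ)^(D+1) ≤ q * sd := by
      have h1 : (q:ℝ)^D ≤ sd := by
        rw [hsddef]
        refine (Real.le_sqrt (by positivity) (by positivity)).2 ?_
        have h2 : ((q:ℝ)^D)^2 = ((q^(2*D) : ℕ):ℝ) := by
          push_cast
          rw [← pow_mul]
          ring_nf
        rw [h2]
        have h3 : q^(2*D) ≤ q^t := Nat.pow_le_pow_right (by omega) (by omega)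
        exact_mod_cast h3.trans hqt_le
      calc (q:ℝ)^(D+1) = (q:ℝ)^D * q := by ring
        _ ≤ sd * q := by nlinarith [h1, hq0]
        _ = q * sd := by ring
    -- (b) d/(D+1) ≤ 2 log q * d / L
    have hb : ((d / (D+1) : ℕ):ℝ) ≤ 2*Real.log q * ((d:ℝ)/L) := by
      have h0 : ((d / (D+1) : ℕ):ℝ) ≤ (d:ℝ)/((D+1 : ℕ):ℝ) := Nat.cast_div_le
      have hD1 : ((t:ℝ)+1)/2 ≤ ((D+1 : ℕ):ℝ) := by
        have h2n : t ≤ 2*D + 1 := by rw [hDdef]; omega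
        have h2 : (t:ℝ) ≤ 2*((D : ℕ):ℝ) + 1 := by exact_mod_cast h2n
        push_cast
        linarith
      have hLlt : L < ((t:ℝ)+1) * Real.log q := by
        rw [hLdef]
        calc Real.log d < Real.log ((q:ℝ)^(t+1)) := Real.log_lt_log hdR0 (by exact_mod_cast hlt)
          _ = ((t:ℝ)+1) * Real.log q := by rw [Real.log_pow]; push_cast; ring
      have hD1pos : (0:ℝ) < ((D+1:ℕ):ℝ) := by positivity
      have hgoal2 : (d:ℝ) * L ≤ 2*Real.log q * (d:ℝ) * ((D+1:ℕ):ℝ) := by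
        have h5 : L < 2 * Real.log q * ((D+1:ℕ):ℝ) := by
          calc L < ((t:ℝ)+1) * Real.log q := hLlt
            _ ≤ (2*((D+1:ℕ):ℝ)) * Real.log q := by nlinarith [hD1, hlogq]
            _ = 2 * Real.log q * ((D+1:ℕ):ℝ) := by ring
        nlinarith [h5, hdR0]
      have h6 : (d:ℝ)/((D+1 : ℕ):ℝ) ≤ (2*Real.log q * (d:ℝ))/L := by
        rw [div_le_div_iff₀ hD1pos hL]
        nlinarith [hgoal2]
      calc ((d / (D+1) : ℕ):ℝ) ≤ (d:ℝ)/((D+1 : ℕ):ℝ) := Nat.cast_div_le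
        _ ≤ (2*Real.log q * (d:ℝ))/L := h6
        _ = 2*Real.log q * ((d:ℝ)/L) := by ring
    -- (c) 1 + q*sd ≤ d/L
    have hc : 1 + (q:ℝ)*sd ≤ (d:ℝ)/L := by
      rw [le_div_iff₀ hL]
      have h1 : (1 + (q:ℝ)*sd) * L ≤ (1+(q:ℝ)*sd) * (4*r) := by
        have : (0:ℝ) < 1 + q*sd := by positivity
        nlinarith [hL4, this]
      have h2 : (1+(q:ℝ)*sd) * (4*r) ≤ (d:ℝ) := by
        have hd_eq : (d:ℝ) = r*r*r*r := by
          have : sd * sd = (d:ℝ) := hsdsq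
          nlinarith [hsdr]
        rw [hd_eq]
        -- (1 + q r²) 4 r ≤ r⁴, given r ≥ 8q, q ≥ 2
        have hq1r : 1 ≤ (q:ℝ)*(r*r) := by nlinarith [hr8q, hq0, hr0]
        nlinarith [hr8q, hq0, hr0, hq1r]
      linarith
    calc (lambdaMax K d : ℝ) ≤ 1 + (q:ℝ)^(D+1) + ((d / (D+1) : ℕ):ℝ) := hboundR
      _ ≤ 1 + (q:ℝ)*sd + 2*Real.log q * ((d:ℝ)/L) := by linarith [ha, hb]
      _ ≤ ((d:ℝ)/L) + 2*Real.log q * ((d:ℝ)/L) := by linarith [hc]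
      _ = (1 + 2*Real.log q) * ((d:ℝ)/L) := by ring
end

section
/- Let K be a field of characteristic 0. The family of polynomials {f_P}, indexed by the binomial(n+d,d) lattice points P of the simplex {(d_1,...,d_n) in N^n : sum d_i <= d} and defined by the factorial-type product construction, is a minimal generating set (of the unit ideal): no proper subfamily generates the same ideal. -/
open MvPolynomial

noncomputable def eeAux (K : Type*) [Field K] (n : ℕ) (P : Fin n → ℕ) : MvPolynomial (Fin n) K :=
  ∏ i, ∏ j ∈ Finset.range (P i), (X i - C (j : K))

lemma eeAux_update (K : Type*) [Field K] (n : ℕ) (Q : Fin n → ℕ) (i : Fin n) :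
    eeAux K n (Function.update Q i (Q i + 1)) = eeAux K n Q * (X i - C (Q i : K)) := by
  unfold eeAux
  rw [← Finset.prod_erase_mul _ _ (Finset.mem_univ i),
      ← Finset.prod_erase_mul _ (fun k => ∏ j ∈ Finset.range (Q k), (X k - C (j : K)))
        (Finset.mem_univ i)]
  rw [mul_assoc]
  congr 1
  · refine Finset.prod_congr rfl fun k hk => ?_
    rw [Function.update_of_ne (Finset.ne_of_mem_erase hk)]
  · rw [Function.update_self, Finset.prod_range_succ]

lemma sum_update_succ (n : ℕ) (Q : Fin n → ℕ) (i : Fin n) :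
    ∑ k, Function.update Q i (Q i + 1) k = (∑ k, Q k) + 1 := by
  rw [Finset.sum_update_of_mem (Finset.mem_univ i),
      ← Finset.add_sum_erase _ Q (Finset.mem_univ i), Finset.erase_eq]
  omega

lemma span_ee (K : Type*) [Field K] [CharZero K] (n : ℕ) (m : ℕ) :
    (∏ j ∈ Finset.range m, ((∑ i, X i) - C (j : K))) ∈
      Ideal.span (eeAux K n '' {P | ∑ i, P i = m}) := by
  induction m with
  | zero =>
    simp only [Finset.range_zero, Finset.prod_empty]
    refine Ideal.subset_span ⟨fun _ => 0, by simp, ?_⟩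
    simp [eeAux]
  | succ m ih =>
    rw [Finset.prod_range_succ]
    refine Submodule.span_induction
      (p := fun x _ => x * ((∑ i, X i) - C (m : K)) ∈
        Ideal.span (eeAux K n '' {P | ∑ i, P i = m + 1})) ?_ ?_ ?_ ?_ ih
    · rintro x ⟨Q, hQ, rfl⟩
      have hQ' : ∑ i, Q i = m := hQ
      have key : eeAux K n Q * ((∑ i, X i) - C (m : K)) =
          ∑ i, eeAux K n (Function.update Q i (Q i + 1)) := by
        have hc : (C (m : K) : MvPolynomial (Fin n) K) = ∑ i, C (Q i : K) := by
          rw [← map_sum]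
          congr 1
          rw [← hQ']
          push_cast
          rfl
        calc eeAux K n Q * ((∑ i, X i) - C (m : K))
            = ∑ i, eeAux K n Q * (X i - C (Q i : K)) := by
              rw [← Finset.mul_sum, hc, Finset.sum_sub_distrib]
          _ = ∑ i, eeAux K n (Function.update Q i (Q i + 1)) := by
              refine Finset.sum_congr rfl fun i _ => (eeAux_update K n Q i).symm
      rw [key]
      refine Ideal.sum_mem _ fun i _ => Ideal.subset_span ⟨Function.update Q i (Q i + 1), ?_, rfl⟩
      show ∑ k, Function.update Q i (Q i + 1) k = m + 1
      rw [sum_update_succ, hQ']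
    · simp
    · intro x y hx hy px py
      rw [add_mul]
      exact Ideal.add_mem _ px py
    · intro a x hx px
      rw [smul_eq_mul, mul_assoc]
      exact Ideal.mul_mem_left _ _ px

theorem stmt_18 {K : Type*} [Field K] [CharZero K] (n d : ℕ) (hn : 0 < n) (hd : 0 < d)
    (F : {P : Fin n → ℕ // ∑ i, P i ≤ d} → MvPolynomial (Fin n) K)
    (hF : ∀ P, F P = (∏ i, ∏ j ∈ Finset.range (P.1 i), (X i - C (j : K))) *
        ∏ k ∈ Finset.Ioc (∑ i, P.1 i) d, ((∑ i, X i) - C (k : K))) :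
    Ideal.span (Set.range F) = ⊤ ∧
    ∀ T : Set {P : Fin n → ℕ // ∑ i, P i ≤ d},
      Ideal.span (F '' T) = Ideal.span (Set.range F) → T = Set.univ := by
  have hg : ∀ m, m ≤ d →
      (∏ k ∈ (Finset.range (d+1)).erase m, ((∑ i, X i) - C (k : K))) ∈
        Ideal.span (Set.range F) := by
    intro m hm
    have hsplit : (Finset.range (d+1)).erase m = Finset.range m ∪ Finset.Ioc m d := by
      ext k
      simp only [Finset.mem_erase, Finset.mem_range, Finset.mem_union, Finset.mem_Ioc]
      omega
    have hdisj : Disjoint (Finset.range m) (Finset.Ioc m d) := by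
      rw [Finset.disjoint_left]
      intro a ha hb
      rw [Finset.mem_range] at ha
      rw [Finset.mem_Ioc] at hb
      omega
    rw [hsplit, Finset.prod_union hdisj]
    refine Submodule.span_induction
      (p := fun x _ => x * (∏ k ∈ Finset.Ioc m d, ((∑ i, X i) - C (k : K))) ∈
        Ideal.span (Set.range F)) ?_ ?_ ?_ ?_ (span_ee K n m)
    · rintro x ⟨Q, hQ, rfl⟩
      have hQ' : ∑ i, Q i = m := hQ
      refine Ideal.subset_span ⟨⟨Q, hQ' ▸ hm⟩, ?_⟩
      rw [hF]
      simp only [eeAux, hQ']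
    · simp
    · intro x y hx hy px py
      rw [add_mul]
      exact Ideal.add_mem _ px py
    · intro a x hx px
      rw [smul_eq_mul, mul_assoc]
      exact Ideal.mul_mem_left _ _ px
  constructor
  · rw [Ideal.eq_top_iff_one]
    have hinj : Set.InjOn (fun k : ℕ => (k : K)) ((Finset.range (d+1) : Finset ℕ) : Set ℕ) :=
      fun a _ b _ h => Nat.cast_injective h
    have hne : (Finset.range (d+1)).Nonempty := ⟨0, by simp⟩
    have hL := Lagrange.sum_basis hinj hne
    have hL2 := congrArg (Polynomial.aeval (∑ i, X i : MvPolynomial (Fin n) K)) hL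
    rw [map_sum, map_one] at hL2
    rw [← hL2]
    refine Ideal.sum_mem _ fun m hm => ?_
    rw [Lagrange.basis]
    simp only [Lagrange.basisDivisor]
    rw [map_prod]
    simp only [map_mul, Polynomial.aeval_C, map_sub, Polynomial.aeval_X, algebraMap_eq]
    rw [Finset.prod_mul_distrib]
    exact Ideal.mul_mem_left _ _ (hg m (Nat.lt_succ_iff.mp (Finset.mem_range.mp hm)))
  · intro T hT
    by_contra hne
    have : ∃ P₀, P₀ ∉ T := by
      by_contra h
      push_neg at h
      exact hne (Set.eq_univ_iff_forall.mpr h)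
    obtain ⟨P₀, hP₀⟩ := this
    set φ : MvPolynomial (Fin n) K →+* K := eval (fun i => (P₀.1 i : K)) with hφ
    have hker : Ideal.span (F '' T) ≤ RingHom.ker φ := by
      rw [Ideal.span_le]
      rintro _ ⟨Q, hQT, rfl⟩
      have hQne : Q.1 ≠ P₀.1 := fun h => hP₀ ((Subtype.ext h) ▸ hQT)
      show φ (F Q) = 0
      rw [hF, map_mul]
      by_cases hcase : ∀ i, Q.1 i ≤ P₀.1 i
      · apply mul_eq_zero_of_right
        have hlt : ∑ i, Q.1 i < ∑ i, P₀.1 i := by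
          obtain ⟨i, hi⟩ := Function.ne_iff.mp hQne
          exact Finset.sum_lt_sum (fun i _ => hcase i)
            ⟨i, Finset.mem_univ i, lt_of_le_of_ne (hcase i) hi⟩
        rw [map_prod]
        apply Finset.prod_eq_zero (Finset.mem_Ioc.mpr ⟨hlt, P₀.2⟩)
        rw [map_sub]
        simp only [hφ, map_sum, eval_X, eval_C]
        push_cast
        ring
      · push_neg at hcase
        obtain ⟨i, hi⟩ := hcase
        apply mul_eq_zero_of_left
        rw [map_prod]
        apply Finset.prod_eq_zero (Finset.mem_univ i)
        rw [map_prod]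
        apply Finset.prod_eq_zero (Finset.mem_range.mpr hi)
        simp [hφ]
    have h1 : F P₀ ∈ Ideal.span (F '' T) := hT ▸ Ideal.subset_span ⟨P₀, rfl⟩
    have h2 : φ (F P₀) = 0 := hker h1
    rw [hF, map_mul] at h2
    rcases mul_eq_zero.mp h2 with h | h
    · rw [map_prod] at h
      obtain ⟨i, _, hi⟩ := Finset.prod_eq_zero_iff.mp h
      rw [map_prod] at hi
      obtain ⟨j, hj, hij⟩ := Finset.prod_eq_zero_iff.mp hi
      rw [Finset.mem_range] at hj
      simp only [hφ, map_sub, eval_X, eval_C] at hij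
      rw [sub_eq_zero] at hij
      exact absurd (Nat.cast_injective hij) (by omega)
    · rw [map_prod] at h
      obtain ⟨k, hk, hk0⟩ := Finset.prod_eq_zero_iff.mp h
      rw [Finset.mem_Ioc] at hk
      simp only [hφ, map_sub, map_sum, eval_X, eval_C] at hk0
      rw [← Nat.cast_sum, sub_eq_zero] at hk0
      exact absurd (Nat.cast_injective hk0) (by omega)
end

section
/- Let K be a field and x, y nonzero elements of K with x^m != y^m for all 1 <= m <= d. For nonnegative integers i, j with i + j <= d, let P_{ij} = ((x^i - y^i)/x^i, (x^j - y^j)/y^j) in K^2, and define f_{ij}(X,Y) = prod_{i'=0}^{i-1}(x^{i'} X - (x^{i'} - y^{i'})) * prod_{j'=0}^{j-1}(y^{j'} Y - (x^{j'} - y^{j'})) * prod_{k=i+j+1}^{d}(x^k X + y^k Y - (x^k - y^k)). Then deg f_{ij} = d, f_{ij}(P_{ij}) != 0, and f_{ij}(P_{i'j'}) = 0 for all (i',j') != (i,j) with i'+j' <= d; consequently {f_{ij}} is a minimal generating set of size binomial(d+2,2) in K[X,Y]. -/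
open MvPolynomial

private lemma my_degree_add {σ : Type*} (u v : σ →₀ ℕ) :
    (u + v).degree = u.degree + v.degree := by
  simp [Finsupp.degree_eq_weight_one, map_add]

private lemma coeff_ne_zero_degree_le {R σ : Type*} [CommSemiring R]
    {h : MvPolynomial σ R} {u : σ →₀ ℕ} (hu : coeff u h ≠ 0) :
    u.degree ≤ h.totalDegree := by
  have := le_totalDegree (p := h) (s := u) (by simpa [mem_support_iff] using hu)
  simpa [Finsupp.degree_apply, Finsupp.sum] using this

private lemma my_totalDegree_mul_eq {R σ : Type*} [CommRing R] [IsDomain R]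
    {f g : MvPolynomial σ R} (hf : f ≠ 0) (hg : g ≠ 0) :
    (f * g).totalDegree = f.totalDegree + g.totalDegree := by
  classical
  refine le_antisymm (totalDegree_mul f g) ?_
  set m := f.totalDegree with hm
  set n := g.totalDegree with hn
  have hkey : homogeneousComponent (m + n) (f * g)
      = homogeneousComponent m f * homogeneousComponent n g := by
    ext s
    rw [coeff_homogeneousComponent, coeff_mul, coeff_mul]
    by_cases hs : s.degree = m + n
    · rw [if_pos hs]
      refine Finset.sum_congr rfl ?_
      intro uv huv
      rw [Finset.HasAntidiagonal.mem_antidiagonal] at huv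
      rw [coeff_homogeneousComponent, coeff_homogeneousComponent]
      have hsum : uv.1.degree + uv.2.degree = m + n := by
        rw [← my_degree_add, huv, hs]
      by_cases h1 : uv.1.degree = m
      · rw [if_pos h1, if_pos (by omega)]
      · rw [if_neg h1]
        rcases lt_or_gt_of_ne h1 with h | h
        · have h2 : coeff uv.2 g = 0 := by
            by_contra hc
            have := coeff_ne_zero_degree_le hc
            omega
          rw [h2, mul_zero, zero_mul]
        · have h2 : coeff uv.1 f = 0 := by
            by_contra hc
            have := coeff_ne_zero_degree_le hc
            omega
          rw [h2, zero_mul, zero_mul]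
    · rw [if_neg hs]
      symm
      refine Finset.sum_eq_zero ?_
      intro uv huv
      rw [Finset.HasAntidiagonal.mem_antidiagonal] at huv
      rw [coeff_homogeneousComponent, coeff_homogeneousComponent]
      by_cases h1 : uv.1.degree = m
      · by_cases h2 : uv.2.degree = n
        · exact absurd (by rw [← huv, my_degree_add, h1, h2]) hs
        · rw [if_neg h2, mul_zero]
      · rw [if_neg h1, zero_mul]
  have htop : ∀ (h : MvPolynomial σ R), h ≠ 0 →
      homogeneousComponent h.totalDegree h ≠ 0 := by
    intro h hh
    obtain ⟨s, hs, hdeg'⟩ := Finset.exists_mem_eq_sup h.support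
      (by simpa using hh) (fun s => s.sum fun _ e => e)
    intro hzero
    have hc : coeff s (homogeneousComponent h.totalDegree h) = 0 := by
      rw [hzero]; simp
    rw [coeff_homogeneousComponent] at hc
    have hdd : s.degree = h.totalDegree := by
      rw [totalDegree, hdeg']
      simp [Finsupp.degree_apply, Finsupp.sum]
    rw [if_pos hdd] at hc
    exact (mem_support_iff.mp hs) hc
  have hne : homogeneousComponent (m + n) (f * g) ≠ 0 := by
    rw [hkey]; exact mul_ne_zero (htop f hf) (htop g hg)
  obtain ⟨s, hs⟩ : ∃ s, coeff s (homogeneousComponent (m + n) (f * g)) ≠ 0 := by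
    by_contra h; push_neg at h
    exact hne (MvPolynomial.ext _ _ fun s => by rw [h s]; simp)
  rw [coeff_homogeneousComponent] at hs
  split_ifs at hs with hdd
  · have := coeff_ne_zero_degree_le hs
    omega
  · exact absurd rfl hs

private lemma my_totalDegree_prod_eq {R σ ι : Type*} [CommRing R] [IsDomain R]
    (s : Finset ι) (f : ι → MvPolynomial σ R) (h : ∀ i ∈ s, f i ≠ 0) :
    (∏ i ∈ s, f i).totalDegree = ∑ i ∈ s, (f i).totalDegree := by
  classical
  induction s using Finset.induction_on with
  | empty => simp
  | insert a s' hns ih =>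
    rw [Finset.prod_insert hns, Finset.sum_insert hns,
      my_totalDegree_mul_eq (h a (Finset.mem_insert_self a s'))
        (Finset.prod_ne_zero_iff.mpr fun i hi => h i (Finset.mem_insert_of_mem hi)),
      ih (fun i hi => h i (Finset.mem_insert_of_mem hi))]

private lemma lin_deg2 {K : Type*} [Field K] (a b c : K) (ha : a ≠ 0) :
    (C a * X 0 + C b * X 1 - C c : MvPolynomial (Fin 2) K).totalDegree = 1 := by
  classical
  apply le_antisymm
  · refine le_trans (totalDegree_sub _ _) (max_le ?_ (by simp))
    refine le_trans (totalDegree_add _ _) (max_le ?_ ?_) <;>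
      refine le_trans (totalDegree_mul _ _) (by rw [totalDegree_C, totalDegree_X])
  · have hs : coeff (Finsupp.single (0 : Fin 2) 1)
        (C a * X 0 + C b * X 1 - C c : MvPolynomial (Fin 2) K) = a := by
      rw [coeff_sub, coeff_add, coeff_C_mul, coeff_C_mul, coeff_X', coeff_X', coeff_C,
        if_pos rfl, if_neg (by simp [Finsupp.single_eq_single_iff]),
        if_neg (fun h => one_ne_zero (Finsupp.single_eq_zero.mp h.symm))]
      ring
    have := le_totalDegree (p := (C a * X 0 + C b * X 1 - C c : MvPolynomial (Fin 2) K))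
      (s := Finsupp.single (0 : Fin 2) 1) (by rw [mem_support_iff, hs]; exact ha)
    simpa using this

private lemma lin_deg {K : Type*} [Field K] (u : Fin 2) (a c : K) (ha : a ≠ 0) :
    (C a * X u - C c : MvPolynomial (Fin 2) K).totalDegree = 1 := by
  classical
  apply le_antisymm
  · refine le_trans (totalDegree_sub _ _) (max_le ?_ (by simp))
    refine le_trans (totalDegree_mul _ _) (by rw [totalDegree_C, totalDegree_X])
  · have hs : coeff (Finsupp.single u 1)
        (C a * X u - C c : MvPolynomial (Fin 2) K) = a := by
      rw [coeff_sub, coeff_C_mul, coeff_X', coeff_C, if_pos rfl,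
        if_neg (fun h => one_ne_zero (Finsupp.single_eq_zero.mp h.symm))]
      ring
    have := le_totalDegree (p := (C a * X u - C c : MvPolynomial (Fin 2) K))
      (s := Finsupp.single u 1) (by rw [mem_support_iff, hs]; exact ha)
    simpa using this

theorem stmt_19 {K : Type*} [Field K] (d : ℕ) (hd : 0 < d)
    (x y : K) (hx : x ≠ 0) (hy : y ≠ 0)
    (hxy : ∀ m : ℕ, 1 ≤ m → m ≤ d → x ^ m ≠ y ^ m)
    (P : {p : ℕ × ℕ // p.1 + p.2 ≤ d} → (Fin 2 → K))
    (hP : ∀ p, P p = ![(x ^ p.1.1 - y ^ p.1.1) / x ^ p.1.1,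
                        (x ^ p.1.2 - y ^ p.1.2) / y ^ p.1.2])
    (F : {p : ℕ × ℕ // p.1 + p.2 ≤ d} → MvPolynomial (Fin 2) K)
    (hF : ∀ p, F p =
      (∏ i' ∈ Finset.range p.1.1, (C (x ^ i') * X 0 - C (x ^ i' - y ^ i'))) *
      (∏ j' ∈ Finset.range p.1.2, (C (y ^ j') * X 1 - C (x ^ j' - y ^ j'))) *
      ∏ k ∈ Finset.Ioc (p.1.1 + p.1.2) d,
        (C (x ^ k) * X 0 + C (y ^ k) * X 1 - C (x ^ k - y ^ k))) :
    (∀ p, (F p).totalDegree = d) ∧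
    (∀ p, eval (P p) (F p) ≠ 0) ∧
    (∀ p q, p ≠ q → eval (P q) (F p) = 0) ∧
    Function.Injective F ∧
    Nat.card {p : ℕ × ℕ // p.1 + p.2 ≤ d} = (d + 2).choose 2 ∧
    (∀ T : Set {p : ℕ × ℕ // p.1 + p.2 ≤ d},
      Ideal.span (F '' T) = Ideal.span (Set.range F) → T = Set.univ) := by
  classical
  have key0 : ∀ a b : ℕ, a < b → b ≤ d → x ^ a * y ^ b ≠ x ^ b * y ^ a := by
    intro a b hab hb h
    apply hxy (b - a) (by omega) (by omega)
    have hb' : b = a + (b - a) := by omega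
    rw [hb', pow_add, pow_add] at h
    exact mul_left_cancel₀ (mul_ne_zero (pow_ne_zero a hx) (pow_ne_zero a hy))
      (show (x ^ a * y ^ a) * x ^ (b - a) = (x ^ a * y ^ a) * y ^ (b - a) by
        linear_combination -h)
  have key : ∀ a b : ℕ, a ≤ d → b ≤ d → (x ^ a * y ^ b = x ^ b * y ^ a ↔ a = b) := by
    intro a b ha hb
    constructor
    · intro h
      rcases lt_trichotomy a b with hab | hab | hab
      · exact absurd h (key0 a b hab hb)
      · exact hab
      · exact absurd h.symm (key0 b a hab ha)
    · rintro rfl; rfl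
  have hP0 : ∀ q : {p : ℕ × ℕ // p.1 + p.2 ≤ d},
      P q 0 = (x ^ q.1.1 - y ^ q.1.1) / x ^ q.1.1 := by
    intro q; rw [hP]; rfl
  have hP1 : ∀ q : {p : ℕ × ℕ // p.1 + p.2 ≤ d},
      P q 1 = (x ^ q.1.2 - y ^ q.1.2) / y ^ q.1.2 := by
    intro q; rw [hP]; rfl
  have evalA : ∀ (q : {p : ℕ × ℕ // p.1 + p.2 ≤ d}) (a : ℕ), a ≤ d →
      (eval (P q) (C (x ^ a) * X 0 - C (x ^ a - y ^ a)) = 0 ↔ a = q.1.1) := by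
    intro q a ha
    have hq1 : q.1.1 ≤ d := le_trans (Nat.le_add_right _ _) q.2
    simp only [map_sub, map_mul, eval_C, eval_X, hP0]
    have h1 : x ^ a * ((x ^ q.1.1 - y ^ q.1.1) / x ^ q.1.1) - (x ^ a - y ^ a)
        = (x ^ q.1.1 * y ^ a - x ^ a * y ^ q.1.1) / x ^ q.1.1 := by
      field_simp
      ring
    rw [h1, div_eq_zero_iff]
    simp only [pow_ne_zero q.1.1 hx, or_false, sub_eq_zero]
    exact (key q.1.1 a hq1 ha).trans eq_comm
  have evalB : ∀ (q : {p : ℕ × ℕ // p.1 + p.2 ≤ d}) (b : ℕ), b ≤ d →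
      (eval (P q) (C (y ^ b) * X 1 - C (x ^ b - y ^ b)) = 0 ↔ b = q.1.2) := by
    intro q b hb
    have hq2 : q.1.2 ≤ d := le_trans (Nat.le_add_left _ _) q.2
    simp only [map_sub, map_mul, eval_C, eval_X, hP1]
    have h1 : y ^ b * ((x ^ q.1.2 - y ^ q.1.2) / y ^ q.1.2) - (x ^ b - y ^ b)
        = (x ^ q.1.2 * y ^ b - x ^ b * y ^ q.1.2) / y ^ q.1.2 := by
      field_simp
      ring
    rw [h1, div_eq_zero_iff]
    simp only [pow_ne_zero q.1.2 hy, or_false, sub_eq_zero]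
    rw [key q.1.2 b hq2 hb]
    exact eq_comm
  have evalCfac : ∀ (q : {p : ℕ × ℕ // p.1 + p.2 ≤ d}) (k : ℕ), k ≤ d →
      (eval (P q) (C (x ^ k) * X 0 + C (y ^ k) * X 1 - C (x ^ k - y ^ k)) = 0
        ↔ k = q.1.1 + q.1.2) := by
    intro q k hk
    have hq : q.1.1 + q.1.2 ≤ d := q.2
    simp only [map_sub, map_add, map_mul, eval_C, eval_X, hP0, hP1]
    have h1 : x ^ k * ((x ^ q.1.1 - y ^ q.1.1) / x ^ q.1.1)
        + y ^ k * ((x ^ q.1.2 - y ^ q.1.2) / y ^ q.1.2) - (x ^ k - y ^ k)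
        = (x ^ (q.1.1 + q.1.2) * y ^ k - x ^ k * y ^ (q.1.1 + q.1.2))
          / (x ^ q.1.1 * y ^ q.1.2) := by
      rw [pow_add, pow_add]
      field_simp
      ring
    rw [h1, div_eq_zero_iff]
    simp only [mul_ne_zero (pow_ne_zero q.1.1 hx) (pow_ne_zero q.1.2 hy), or_false,
      sub_eq_zero]
    rw [key (q.1.1 + q.1.2) k hq hk]
    exact eq_comm
  have mainzero : ∀ p q : {p : ℕ × ℕ // p.1 + p.2 ≤ d},
      (eval (P q) (F p) = 0 ↔
        (q.1.1 < p.1.1 ∨ q.1.2 < p.1.2 ∨ p.1.1 + p.1.2 < q.1.1 + q.1.2)) := by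
    intro p q
    have hp : p.1.1 + p.1.2 ≤ d := p.2
    have hq : q.1.1 + q.1.2 ≤ d := q.2
    rw [hF, map_mul, map_mul, mul_eq_zero, mul_eq_zero, map_prod, map_prod, map_prod,
      Finset.prod_eq_zero_iff, Finset.prod_eq_zero_iff, Finset.prod_eq_zero_iff]
    constructor
    · rintro ((⟨a, ha, h⟩ | ⟨b, hb, h⟩) | ⟨k, hk, h⟩)
      · rw [Finset.mem_range] at ha
        rw [evalA q a (by omega)] at h
        omega
      · rw [Finset.mem_range] at hb
        rw [evalB q b (by omega)] at h
        omega
      · rw [Finset.mem_Ioc] at hk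
        rw [evalCfac q k (by omega)] at h
        omega
    · rintro (h | h | h)
      · exact Or.inl (Or.inl ⟨q.1.1, Finset.mem_range.mpr h,
          (evalA q q.1.1 (by omega)).mpr rfl⟩)
      · exact Or.inl (Or.inr ⟨q.1.2, Finset.mem_range.mpr h,
          (evalB q q.1.2 (by omega)).mpr rfl⟩)
      · exact Or.inr ⟨q.1.1 + q.1.2, Finset.mem_Ioc.mpr ⟨h, hq⟩,
          (evalCfac q (q.1.1 + q.1.2) (by omega)).mpr rfl⟩
  have part2 : ∀ p, eval (P p) (F p) ≠ 0 := by
    intro p h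
    rw [mainzero] at h
    omega
  have part3 : ∀ p q, p ≠ q → eval (P q) (F p) = 0 := by
    intro p q hpq
    rw [mainzero]
    by_contra h
    push_neg at h
    obtain ⟨h1, h2, h3⟩ := h
    apply hpq
    apply Subtype.ext
    have h4 : p.1.1 = q.1.1 ∧ p.1.2 = q.1.2 := by omega
    exact Prod.ext h4.1 h4.2
  -- degrees
  have part1 : ∀ p, (F p).totalDegree = d := by
    intro p
    have hp : p.1.1 + p.1.2 ≤ d := p.2
    have hA : ∀ a : ℕ, (C (x ^ a) * X 0 - C (x ^ a - y ^ a) : MvPolynomial (Fin 2) K) ≠ 0 := by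
      intro a h0
      have := lin_deg (0 : Fin 2) (x ^ a) (x ^ a - y ^ a) (pow_ne_zero a hx)
      rw [h0] at this
      simp at this
    have hB : ∀ b : ℕ, (C (y ^ b) * X 1 - C (x ^ b - y ^ b) : MvPolynomial (Fin 2) K) ≠ 0 := by
      intro b h0
      have := lin_deg (1 : Fin 2) (y ^ b) (x ^ b - y ^ b) (pow_ne_zero b hy)
      rw [h0] at this
      simp at this
    have hC : ∀ k : ℕ,
        (C (x ^ k) * X 0 + C (y ^ k) * X 1 - C (x ^ k - y ^ k) : MvPolynomial (Fin 2) K) ≠ 0 := by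
      intro k h0
      have := lin_deg2 (x ^ k) (y ^ k) (x ^ k - y ^ k) (pow_ne_zero k hx)
      rw [h0] at this
      simp at this
    rw [hF,
      my_totalDegree_mul_eq
        (mul_ne_zero (Finset.prod_ne_zero_iff.mpr fun a _ => hA a)
          (Finset.prod_ne_zero_iff.mpr fun b _ => hB b))
        (Finset.prod_ne_zero_iff.mpr fun k _ => hC k),
      my_totalDegree_mul_eq (Finset.prod_ne_zero_iff.mpr fun a _ => hA a)
        (Finset.prod_ne_zero_iff.mpr fun b _ => hB b),
      my_totalDegree_prod_eq _ _ (fun a _ => hA a),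
      my_totalDegree_prod_eq _ _ (fun b _ => hB b),
      my_totalDegree_prod_eq _ _ (fun k _ => hC k)]
    rw [Finset.sum_congr rfl (fun a _ => lin_deg (0 : Fin 2) (x ^ a) _ (pow_ne_zero a hx)),
      Finset.sum_congr rfl (fun b _ => lin_deg (1 : Fin 2) (y ^ b) _ (pow_ne_zero b hy)),
      Finset.sum_congr rfl (fun k _ => lin_deg2 (x ^ k) (y ^ k) _ (pow_ne_zero k hx))]
    simp [Nat.card_Ioc]
    omega
  -- injectivity
  have part4 : Function.Injective F := by
    intro p q h
    by_contra hne
    have h0 := part3 p q hne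
    rw [h] at h0
    exact part2 q h0
  -- cardinality
  have part5 : Nat.card {p : ℕ × ℕ // p.1 + p.2 ≤ d} = (d + 2).choose 2 := by
    have hsum : ∀ n : ℕ, ∑ m ∈ Finset.range n, (m + 1) = (n + 1).choose 2 := by
      intro n
      induction n with
      | zero => simp
      | succ k ih =>
        rw [Finset.sum_range_succ, ih]
        have h2 := Nat.choose_succ_succ (k + 1) 1
        rw [Nat.choose_one_right] at h2
        norm_num at h2
        omega
    have hdisj : ∀ a ∈ Finset.range (d + 1), ∀ b ∈ Finset.range (d + 1), a ≠ b →
        Disjoint (Finset.HasAntidiagonal.antidiagonal a) (Finset.HasAntidiagonal.antidiagonal b) := by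
      intro a _ b _ hab
      rw [Finset.disjoint_left]
      intro p hpa hpb
      rw [Finset.HasAntidiagonal.mem_antidiagonal] at hpa hpb
      omega
    have hset : {p : ℕ × ℕ | p.1 + p.2 ≤ d}
        = ↑((Finset.range (d + 1)).biUnion (fun m => Finset.HasAntidiagonal.antidiagonal m)) := by
      ext p
      simp only [Set.mem_setOf_eq, Finset.coe_biUnion, Finset.mem_coe, Set.mem_iUnion,
        Finset.mem_range, Finset.HasAntidiagonal.mem_antidiagonal]
      constructor
      · intro h
        exact ⟨p.1 + p.2, by omega, rfl⟩
      · rintro ⟨m, hm, hm2⟩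
        omega
    calc Nat.card {p : ℕ × ℕ // p.1 + p.2 ≤ d}
        = Set.ncard {p : ℕ × ℕ | p.1 + p.2 ≤ d} := (Nat.card_coe_set_eq _)
      _ = ((Finset.range (d + 1)).biUnion (fun m => Finset.HasAntidiagonal.antidiagonal m)).card := by
          rw [hset, Set.ncard_coe_finset]
      _ = ∑ m ∈ Finset.range (d + 1), (Finset.HasAntidiagonal.antidiagonal m).card :=
          Finset.card_biUnion hdisj
      _ = ∑ m ∈ Finset.range (d + 1), (m + 1) := by
          simp [Finset.Nat.card_antidiagonal]
      _ = (d + 2).choose 2 := hsum (d + 1)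
  refine ⟨part1, part2, part3, part4, part5, ?_⟩
  intro T hT
  by_contra hne
  obtain ⟨p, hp⟩ : ∃ p, p ∉ T := by
    by_contra h
    push_neg at h
    exact hne (Set.eq_univ_iff_forall.mpr h)
  have hmem : F p ∈ Ideal.span (F '' T) := by
    rw [hT]
    exact Ideal.subset_span (Set.mem_range_self p)
  have hle : Ideal.span (F '' T) ≤ RingHom.ker (eval (P p)) := by
    rw [Ideal.span_le]
    rintro _ ⟨q, hq, rfl⟩
    rw [SetLike.mem_coe, RingHom.mem_ker]
    exact part3 q p (fun h => hp (h ▸ hq))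
  exact part2 p (hle hmem)
end
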